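/- arXiv:1109.2386 — 9 statements merged into one kernel-verified Lean document; each statement's English description precedes it below -/
import Mathlib

section
/- For positive integers x, y, a, b with b ≤ a and x ≤ y, the sum over m from x to y of C(b,m)/C(a,m) equals [C(a+1-x, a+1-b) - C(a-y, a+1-b)] / C(a,b). -/
/-
With `g m = C(a+1-m, a+1-b)`, Pascal's rule gives `g m - g (m+1) = C(a-m, a-b)`, and
`C(a,b) C(b,m) = C(a,m) C(a-m, b-m)` turns this into `C(a,b) · C(b,m)/C(a,m)` (for `m > b` both
sides vanish). The sum therefore telescopes to `(g x - g (y+1)) / C(a,b)`.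
-/

open Finset

theorem Finset.sum_Icc_sub_succ {M : Type*} [AddCommGroup M] (f : ℕ → M) {x y : ℕ} (h : x ≤ y) :
    ∑ m ∈ Icc x y, (f m - f (m + 1)) = f x - f (y + 1) := by
  rw [← Ico_add_one_right_eq_Icc]
  rw [← neg_sub, ← sum_Ico_sub f (by omega : x ≤ y + 1), ← sum_neg_distrib]
  simp only [neg_sub]

namespace Nat

theorem choose_div_choose_eq {a b m : ℕ} (hm : m ≤ b) (hba : b ≤ a) :
    (b.choose m : ℚ) / a.choose m = (a - m).choose (a - b) / a.choose b := by
  have hmul : a.choose b * b.choose m = a.choose m * (a - m).choose (a - b) := by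
    rw [choose_mul hm, ← choose_symm (by omega : b - m ≤ a - m)]
    congr 2
    omega
  have hab : (a.choose b : ℚ) ≠ 0 := by exact_mod_cast (choose_pos hba).ne'
  have ham : (a.choose m : ℚ) ≠ 0 := by exact_mod_cast (choose_pos (hm.trans hba)).ne'
  rw [div_eq_div_iff ham hab]
  exact_mod_cast (mul_comm _ _).trans (hmul.trans (mul_comm _ _))

theorem choose_add_one_sub {a b m : ℕ} (hm : m ≤ a) (hba : b ≤ a) :
    (a + 1 - m).choose (a + 1 - b) = (a - m).choose (a - b) + (a - m).choose (a + 1 - b) := by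
  rw [show a + 1 - m = a - m + 1 by omega, show a + 1 - b = a - b + 1 by omega,
    choose_succ_succ]

theorem choose_div_choose_eq_sub {a b : ℕ} (hba : b ≤ a) (m : ℕ) :
    (b.choose m : ℚ) / a.choose m =
      (((a + 1 - m).choose (a + 1 - b) : ℚ) - (a + 1 - (m + 1)).choose (a + 1 - b)) /
        a.choose b := by
  rw [Nat.add_sub_add_right]
  rcases le_or_gt m b with hm | hm
  · rw [choose_div_choose_eq hm hba, choose_add_one_sub (hm.trans hba) hba]
    push_cast
    ring
  · rw [choose_eq_zero_of_lt hm, choose_eq_zero_of_lt (by omega : a + 1 - m < a + 1 - b),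
      choose_eq_zero_of_lt (by omega : a - m < a + 1 - b)]
    simp

end Nat

theorem stmt0_general (x y a b : ℕ)
    (hba : b ≤ a) (hxy : x ≤ y) :
    ∑ m ∈ Finset.Icc x y, (Nat.choose b m : ℚ) / (Nat.choose a m : ℚ) =
      ((Nat.choose (a + 1 - x) (a + 1 - b) : ℚ) - (Nat.choose (a - y) (a + 1 - b) : ℚ)) /
        (Nat.choose a b : ℚ) := by
  simp_rw [Nat.choose_div_choose_eq_sub hba, ← sum_div,
    sum_Icc_sub_succ (fun m => ((a + 1 - m).choose (a + 1 - b) : ℚ)) hxy, Nat.add_sub_add_right]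

theorem stmt0 (x y a b : ℕ) (hx : 0 < x) (hy : 0 < y) (ha : 0 < a) (hb : 0 < b)
    (hba : b ≤ a) (hxy : x ≤ y) :
    ∑ m ∈ Finset.Icc x y, (Nat.choose b m : ℚ) / (Nat.choose a m : ℚ) =
      ((Nat.choose (a + 1 - x) (a + 1 - b) : ℚ) - (Nat.choose (a - y) (a + 1 - b) : ℚ)) /
        (Nat.choose a b : ℚ) :=
  stmt0_general x y a b hba hxy
end

section
/- For positive integers a and b, the sum over m from 1 to a of (1/m)·C(a-m, b) equals C(a,b)·(H_a - H_b), where H_k denotes the k-th harmonic number. -/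
/-- The `k`-th harmonic number `1 + 1/2 + ⋯ + 1/k`, with `H 0 = 0`. -/
def H (k : ℕ) : ℚ := ∑ i ∈ Finset.range k, (1 : ℚ) / (i + 1)

/-!
Induct on `a`. Pascal's rule applied to `C(a + 1 - m, b + 1)` splits the sum for `(a + 1, b + 1)`
into the sums for `(a, b)` and `(a, b + 1)`, and the claimed closed form satisfies the same
recursion because `C(a + 1, b + 1) / (a + 1) = C(a, b) / (b + 1)`.
-/

open Finset

lemma H_succ (n : ℕ) : H (n + 1) = H n + 1 / ((n : ℚ) + 1) := by
  simp [H, sum_range_succ]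

lemma sum_Icc_one_div_eq_H (n : ℕ) : ∑ m ∈ Icc 1 n, 1 / (m : ℚ) = H n := by
  induction n with
  | zero => simp [H]
  | succ n ih =>
    rw [sum_Icc_succ_top (by omega), ih, H_succ]
    push_cast
    rfl

lemma choose_succ_succ_div_succ (a b : ℕ) :
    ((a + 1).choose (b + 1) : ℚ) / ((a : ℚ) + 1) = (a.choose b : ℚ) / ((b : ℚ) + 1) := by
  rw [div_eq_div_iff (by positivity) (by positivity)]
  exact_mod_cast (Nat.add_one_mul_choose_eq a b).symm.trans (mul_comm _ _)

lemma sum_Icc_one_div_mul_choose_sub_succ (a b : ℕ) :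
    ∑ m ∈ Icc 1 (a + 1), 1 / (m : ℚ) * ((a + 1 - m).choose (b + 1) : ℚ) =
      ∑ m ∈ Icc 1 a, 1 / (m : ℚ) * ((a - m).choose b : ℚ) +
        ∑ m ∈ Icc 1 a, 1 / (m : ℚ) * ((a - m).choose (b + 1) : ℚ) := by
  rw [sum_Icc_succ_top (by omega), ← sum_add_distrib]
  simp only [Nat.sub_self, Nat.choose_zero_succ, Nat.cast_zero, mul_zero, add_zero]
  refine sum_congr rfl fun m hm => ?_
  rw [Nat.sub_add_comm (mem_Icc.mp hm).2, Nat.choose_succ_succ]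
  push_cast
  ring

theorem sum_Icc_one_div_mul_choose_sub (a b : ℕ) :
    ∑ m ∈ Icc 1 a, 1 / (m : ℚ) * ((a - m).choose b : ℚ) = (a.choose b : ℚ) * (H a - H b) := by
  induction a generalizing b with
  | zero => cases b <;> simp [H]
  | succ a ih =>
    cases b with
    | zero => simpa [show H 0 = 0 by simp [H]] using sum_Icc_one_div_eq_H (a + 1)
    | succ b =>
      rw [sum_Icc_one_div_mul_choose_sub_succ, ih, ih, Nat.choose_succ_succ', H_succ, H_succ]
      have hdiv := choose_succ_succ_div_succ a b
      rw [Nat.choose_succ_succ'] at hdiv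
      push_cast at hdiv ⊢
      linear_combination -hdiv

theorem stmt1_general (a b : ℕ) :
    ∑ m ∈ Finset.Icc 1 a, (1 / (m : ℚ)) * (Nat.choose (a - m) b : ℚ) =
      (Nat.choose a b : ℚ) * (H a - H b) :=
  sum_Icc_one_div_mul_choose_sub a b

theorem stmt1 (a b : ℕ) (ha : 0 < a) (hb : 0 < b) :
    ∑ m ∈ Finset.Icc 1 a, (1 / (m : ℚ)) * (Nat.choose (a - m) b : ℚ) =
      (Nat.choose a b : ℚ) * (H a - H b) :=
  stmt1_general a b
end

section
/- Let n_1, ..., n_L be nonnegative integers with sum n, and fix a sample size m and an index j. Then the sum over all tuples (m_1,...,m_L) with 0 < m_i ≤ n_i for all i and Σ m_i = m of [Π_i C(n_i, m_i) / C(n,m)] · m_j(m_j + 1) equals the sum over all subsets T of {1,...,L} not containing j of (-1)^{|T|} · [ (n_j)_2 (m)_2 / (n - n_T)_2 + 2 n_j m / (n - n_T) ] · C(n - n_T, m)/C(n, m), where n_T = Σ_{i ∈ T} n_i and (x)_2 = x(x-1). -/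
/-!
Inclusion–exclusion over the set `T` of coordinates forced to vanish turns the constraint
`m_i > 0` into an alternating sum of unconstrained sums over compositions of `m` supported on the
complement of `T`; the sets `T ∋ j` contribute nothing because the weight `m_j (m_j + 1)` vanishes at
`m_j = 0`. For the other `T`, peeling off coordinate `j` and applying Vandermonde's identity to the
remaining coordinates reduces everything to the univariate factorial moments
`∑_k (k)_r C(a, k) C(b, M - k) = (a)_r (M)_r / (a + b)_r · C(a + b, M)`, used for `r = 1, 2` via
`m_j (m_j + 1) = (m_j)_2 + 2 (m_j)_1`.
-/

open Finset

namespace Nat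

theorem descFactorial_mul_choose_eq (n : ℕ) {k r : ℕ} (hrk : r ≤ k) :
    k.descFactorial r * n.choose k = n.descFactorial r * (n - r).choose (k - r) := by
  rw [descFactorial_eq_factorial_mul_choose, descFactorial_eq_factorial_mul_choose, mul_assoc,
    mul_comm (k.choose r), choose_mul hrk, mul_assoc]

theorem sum_antidiagonal_descFactorial_mul_choose_mul_choose (a b r M : ℕ) :
    ∑ p ∈ antidiagonal (M + r), p.1.descFactorial r * a.choose p.1 * b.choose p.2 =
      a.descFactorial r * (a - r + b).choose M := by
  rw [Finset.Nat.sum_antidiagonal_eq_sum_range_succ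
      (fun k l => k.descFactorial r * a.choose k * b.choose l),
    show (M + r).succ = r + (M + 1) by omega, sum_range_add,
    sum_eq_zero fun k hk => by rw [descFactorial_of_lt (mem_range.1 hk), zero_mul, zero_mul],
    zero_add, add_choose_eq, Finset.Nat.sum_antidiagonal_eq_sum_range_succ_mk, mul_sum]
  refine sum_congr rfl fun k _ => ?_
  rw [descFactorial_mul_choose_eq _ (le_add_right r k), add_tsub_cancel_left,
    show M + r - (r + k) = M - k by omega, mul_assoc]

variable {K : Type*} [Field K] [CharZero K]

/-- The division is by zero only when `a + b < r`, and then `a.descFactorial r = 0` as well. -/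
theorem sum_antidiagonal_descFactorial_mul_choose_mul_choose_eq_div (a b r M : ℕ) :
    ∑ p ∈ antidiagonal M, (p.1.descFactorial r * a.choose p.1 * b.choose p.2 : K) =
      a.descFactorial r * M.descFactorial r / (a + b).descFactorial r * (a + b).choose M := by
  rcases lt_or_ge M r with hMr | hrM
  · rw [descFactorial_of_lt hMr, sum_eq_zero fun p hp => ?_]
    · simp
    rw [descFactorial_of_lt ((HasAntidiagonal.antidiagonal.fst_le hp).trans_lt hMr)]
    simp
  obtain ⟨M, rfl⟩ : ∃ M', M = M' + r := ⟨M - r, by omega⟩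
  have hsum := congrArg (Nat.cast : ℕ → K)
    (sum_antidiagonal_descFactorial_mul_choose_mul_choose a b r M)
  push_cast at hsum
  rw [hsum]
  rcases lt_or_ge a r with har | hra
  · simp [descFactorial_of_lt har]
  have hN : ((a + b).descFactorial r : K) ≠ 0 := by
    exact_mod_cast (descFactorial_pos.2 (by omega)).ne'
  have key := congrArg (Nat.cast : ℕ → K) (descFactorial_mul_choose_eq (a + b) hrM)
  push_cast at key
  rw [add_tsub_cancel_right] at key
  rw [tsub_add_eq_add_tsub hra, div_mul_eq_mul_div, eq_div_iff hN]
  linear_combination -(a.descFactorial r : K) * key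

end Nat

namespace Finset

theorem sum_filter_forall_not_eq_sum_neg_one_pow {β ι R : Type*} [Fintype ι] [DecidableEq ι]
    [CommRing R] (A : Finset β) (P : β → ι → Prop) [∀ b i, Decidable (P b i)] (w : β → R) :
    ∑ b ∈ A with ∀ i, ¬ P b i, w b =
      ∑ T : Finset ι, (-1) ^ #T * ∑ b ∈ A with ∀ i ∈ T, P b i, w b := by
  simp_rw [sum_filter, mul_sum]
  rw [sum_comm]
  refine sum_congr rfl fun b _ => ?_
  have hsubset (T : Finset ι) : (∀ i ∈ T, P b i) ↔ T ⊆ univ.filter (P b) := by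
    simp [subset_iff]
  have halternating : ∑ T ∈ (univ.filter (P b)).powerset, (-1 : R) ^ #T =
      if univ.filter (P b) = ∅ then 1 else 0 := by
    exact_mod_cast congrArg (Int.cast : ℤ → R) sum_powerset_neg_one_pow_card
  simp_rw [mul_ite, mul_zero, hsubset]
  rw [← sum_filter, filter_subset_univ, ← sum_mul, halternating]
  simp [filter_eq_empty_iff]

section PiAntidiag

variable {ι : Type*} [DecidableEq ι]

theorem apply_eq_zero_of_mem_piAntidiag {s : Finset ι} {M : ℕ} {f : ι → ℕ}
    (hf : f ∈ s.piAntidiag M) {i : ι} (hi : i ∉ s) : f i = 0 :=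
  not_not.1 fun h => hi ((mem_piAntidiag.1 hf).2 i h)

theorem filter_piAntidiag_forall_eq_zero (s T : Finset ι) (M : ℕ)
    [DecidablePred fun f : ι → ℕ => ∀ i ∈ T, f i = 0] :
    (s.piAntidiag M).filter (fun f => ∀ i ∈ T, f i = 0) = (s \ T).piAntidiag M := by
  ext f
  simp only [mem_filter, mem_piAntidiag, mem_sdiff]
  constructor
  · rintro ⟨⟨hsum, hsupp⟩, hT⟩
    refine ⟨?_, fun i hi => ⟨hsupp i hi, fun hiT => hi (hT i hiT)⟩⟩
    rw [← hsum]
    exact sum_subset sdiff_subset fun i hi his =>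
      hT i (not_not.1 fun h => his (mem_sdiff.2 ⟨hi, h⟩))
  · rintro ⟨hsum, hsupp⟩
    refine ⟨⟨?_, fun i hi => (hsupp i hi).1⟩,
      fun i hiT => not_not.1 fun h => (hsupp i h).2 hiT⟩
    rw [← hsum]
    exact (sum_subset sdiff_subset fun i _ hi =>
      not_not.1 fun h => hi (mem_sdiff.2 (hsupp i h))).symm

theorem sum_piAntidiag_cons_prod_mul {R : Type*} [CommSemiring R] {i : ι} {s : Finset ι}
    (hi : i ∉ s) (M : ℕ) (c : ι → ℕ → R) (g : ℕ → R) :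
    ∑ f ∈ (cons i s hi).piAntidiag M, (∏ k ∈ cons i s hi, c k (f k)) * g (f i) =
      ∑ p ∈ antidiagonal M, c i p.1 * g p.1 * ∑ f ∈ s.piAntidiag p.2, ∏ k ∈ s, c k (f k) := by
  rw [piAntidiag_cons, sum_disjiUnion]
  refine sum_congr rfl fun p _ => ?_
  rw [sum_map, mul_sum]
  refine sum_congr rfl fun f hf => ?_
  have hne : ∀ k ∈ s, k ≠ i := fun k hk h => hi (h ▸ hk)
  simp only [addRightEmbedding_apply, Pi.add_apply, prod_cons, if_pos,
    apply_eq_zero_of_mem_piAntidiag hf hi, zero_add]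
  rw [prod_congr rfl fun k hk => by rw [if_neg (hne k hk), add_zero]]
  ring

theorem sum_piAntidiag_prod_choose (n : ι → ℕ) (s : Finset ι) (M : ℕ) :
    ∑ f ∈ s.piAntidiag M, ∏ i ∈ s, (n i).choose (f i) = (∑ i ∈ s, n i).choose M := by
  induction s using Finset.cons_induction generalizing M with
  | empty => cases M <;> simp
  | cons i s hi ih =>
    simpa only [Pi.one_apply, mul_one, ih, sum_cons, Nat.add_choose_eq] using
      sum_piAntidiag_cons_prod_mul hi M (fun k l => (n k).choose l) 1

variable {K : Type*} [Field K] [CharZero K]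

theorem sum_piAntidiag_prod_choose_mul_descFactorial (n : ι → ℕ) {s : Finset ι} {j : ι}
    (hj : j ∈ s) (M r : ℕ) :
    ∑ f ∈ s.piAntidiag M, (∏ i ∈ s, ((n i).choose (f i) : K)) * (f j).descFactorial r =
      (n j).descFactorial r * M.descFactorial r / (∑ i ∈ s, n i).descFactorial r *
        (∑ i ∈ s, n i).choose M := by
  rw [← insert_erase hj, ← cons_eq_insert _ _ (notMem_erase j s),
    sum_piAntidiag_cons_prod_mul _ M (fun k l => ((n k).choose l : K))
      fun l => l.descFactorial r,
    sum_cons, ← Nat.sum_antidiagonal_descFactorial_mul_choose_mul_choose_eq_div]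
  refine sum_congr rfl fun p _ => ?_
  rw [← sum_piAntidiag_prod_choose]
  push_cast
  ring

theorem sum_piAntidiag_prod_choose_mul_mul_add_one (n : ι → ℕ) {s : Finset ι} {j : ι}
    (hj : j ∈ s) (M : ℕ) :
    ∑ f ∈ s.piAntidiag M, (∏ i ∈ s, ((n i).choose (f i) : K)) * (f j * (f j + 1)) =
      (((n j).descFactorial 2 * M.descFactorial 2 : K) / (∑ i ∈ s, n i).descFactorial 2 +
        2 * n j * M / (∑ i ∈ s, n i : ℕ)) * (∑ i ∈ s, n i).choose M := by
  have hweight (k : ℕ) : (k * (k + 1) : K) = k.descFactorial 2 + 2 * k.descFactorial 1 := by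
    rw [Nat.cast_descFactorial_two, Nat.descFactorial_one]
    ring
  simp_rw [hweight, mul_add, sum_add_distrib, mul_left_comm _ (2 : K), ← mul_sum,
    sum_piAntidiag_prod_choose_mul_descFactorial n hj, Nat.descFactorial_one]
  ring

theorem sum_piAntidiag_univ_filter_ne_zero_prod_choose_mul_mul_add_one [Fintype ι]
    (n : ι → ℕ) (M : ℕ) (j : ι) :
    ∑ f ∈ (univ : Finset ι).piAntidiag M with ∀ i, f i ≠ 0,
        (∏ i, ((n i).choose (f i) : K)) * (f j * (f j + 1)) =
      ∑ T : Finset ι with j ∉ T, (-1) ^ #T *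
        (((n j).descFactorial 2 * M.descFactorial 2 : K) / (∑ i ∈ univ \ T, n i).descFactorial 2 +
          2 * n j * M / (∑ i ∈ univ \ T, n i : ℕ)) *
        (∑ i ∈ univ \ T, n i).choose M := by
  have hvanish (T : Finset ι) (hjT : j ∈ T) :
      ∑ f ∈ univ.piAntidiag M with ∀ i ∈ T, f i = 0,
        (∏ i, ((n i).choose (f i) : K)) * (f j * (f j + 1)) = 0 :=
    sum_eq_zero fun f hf => by rw [(mem_filter.1 hf).2 j hjT]; simp
  refine (sum_filter_forall_not_eq_sum_neg_one_pow _ (fun (f : ι → ℕ) i => f i = 0) _).trans ?_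
  rw [← sum_filter_of_ne (p := fun T => j ∉ T) fun T _ hT hjT =>
    hT (by rw [hvanish T hjT, mul_zero])]
  refine sum_congr rfl fun T hT => ?_
  rw [mul_assoc, filter_piAntidiag_forall_eq_zero, ← sum_piAntidiag_prod_choose_mul_mul_add_one n
    (mem_sdiff.2 ⟨mem_univ j, (mem_filter.1 hT).2⟩)]
  congr 1
  refine sum_congr rfl fun f hf => ?_
  rw [prod_subset (subset_univ (univ \ T)) fun i _ hi => by
    rw [apply_eq_zero_of_mem_piAntidiag hf hi, Nat.choose_zero_right, Nat.cast_one]]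

end PiAntidiag

end Finset

theorem stmt4 (L : ℕ) (n : Fin L → ℕ) (m : ℕ) (j : Fin L) :
    ∑ f ∈ (Finset.Nat.antidiagonalTuple L m).filter (fun f => ∀ i, 0 < f i ∧ f i ≤ n i),
      ((∏ i, (Nat.choose (n i) (f i) : ℚ)) / (Nat.choose (∑ i, n i) m : ℚ)) *
        ((f j : ℚ) * ((f j : ℚ) + 1)) =
    ∑ T ∈ (Finset.univ : Finset (Finset (Fin L))).filter (fun T => j ∉ T),
      (-1 : ℚ) ^ T.card *
        ((Nat.descFactorial (n j) 2 * Nat.descFactorial m 2 : ℚ) /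
            ((Nat.descFactorial (∑ i, n i - ∑ i ∈ T, n i) 2 : ℕ) : ℚ) +
          2 * (n j : ℚ) * (m : ℚ) / (((∑ i, n i - ∑ i ∈ T, n i : ℕ)) : ℚ)) *
        ((Nat.choose (∑ i, n i - ∑ i ∈ T, n i) m : ℚ) / (Nat.choose (∑ i, n i) m : ℚ)) := by
  have hcompl (T : Finset (Fin L)) : ∑ i ∈ univ \ T, n i = ∑ i, n i - ∑ i ∈ T, n i :=
    eq_tsub_of_add_eq (sum_sdiff (subset_univ T))
  have hsupport : ∑ f ∈ univ.piAntidiag m with ∀ i, 0 < f i ∧ f i ≤ n i,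
        (∏ i, ((n i).choose (f i) : ℚ)) * (f j * (f j + 1)) =
      ∑ f ∈ univ.piAntidiag m with ∀ i, f i ≠ 0,
        (∏ i, ((n i).choose (f i) : ℚ)) * (f j * (f j + 1)) := by
    rw [← sum_filter_of_ne (s := {f ∈ univ.piAntidiag m | ∀ i, f i ≠ 0})
      (p := fun f => ∀ i, f i ≤ n i), filter_filter]
    · exact sum_congr (filter_congr fun f _ => by simp only [Nat.pos_iff_ne_zero, forall_and])
        fun _ _ => rfl
    · intro f _ hF i
      by_contra! hlt
      exact hF (by rw [prod_eq_zero (mem_univ i) (by simp [Nat.choose_eq_zero_of_lt hlt]),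
        zero_mul])
  rw [← piAntidiag_univ_fin_eq_antidiagonalTuple]
  simp_rw [← hcompl, div_mul_eq_mul_div, mul_div_assoc', ← sum_div]
  rw [hsupport]
  congr 1
  -- the two sides differ only in the `Decidable` instance of `∀ i, f i ≠ 0` over `Fin L`
  convert sum_piAntidiag_univ_filter_ne_zero_prod_choose_mul_mul_add_one (K := ℚ) n m j using 3
end

section
/- Let n_1, ..., n_L be nonnegative integers with sum n, fix a sample size m and distinct indices j ≠ k. Then the sum over all tuples (m_1,...,m_L) with 0 < m_i ≤ n_i for all i and Σ m_i = m of [Π_i C(n_i, m_i) / C(n,m)] · m_j m_k equals the sum over all subsets T of {1,...,L} containing neither j nor k of (-1)^{|T|} · [n_j n_k (m)_2 / (n - n_T)_2] · C(n - n_T, m)/C(n,m), where n_T = Σ_{i ∈ T} n_i. -/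
/-!
Since `C(n_i, m_i) = 0` for `m_i > n_i`, the constraint `m_i ≤ n_i` can be dropped, and
inclusion–exclusion over the set `T` of coordinates forced to vanish removes the constraint
`m_i > 0`; forcing `m_i = 0` for `i ∈ T` amounts to replacing `n_i` by `0`. What is left is the
second factorial moment of the multivariate hypergeometric distribution,
`∑ ∏ C(a_i, m_i) m_j m_k = a_j a_k C(A - 2, m - 2)` with `A = ∑ a_i`: it is the `m`-th coefficient
of `∏ (X + 1) ^ a_i` after `X d/dX` has been applied to the `j`-th and `k`-th factors, and these
two factors become `a_j X (X + 1) ^ (a_j - 1)` and `a_k X (X + 1) ^ (a_k - 1)`.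
-/

open Finset Polynomial

theorem Polynomial.coeff_prod_eq_sum_piAntidiag {ι R : Type*} [CommSemiring R] [DecidableEq ι]
    (s : Finset ι) (p : ι → R[X]) (d : ℕ) :
    (∏ i ∈ s, p i).coeff d = ∑ f ∈ s.piAntidiag d, ∏ i ∈ s, (p i).coeff (f i) := by
  rw [← coeff_coe, ← coeToPowerSeries.ringHom_apply, map_prod, PowerSeries.coeff_prod,
    finsuppAntidiag, sum_map, ← sum_attach (piAntidiag s d)]
  simp only [coeToPowerSeries.ringHom_apply, coeff_coe]
  rfl

theorem Polynomial.coeff_X_mul_derivative {R : Type*} [Semiring R] (p : R[X]) (d : ℕ) :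
    (X * derivative p).coeff d = d * p.coeff d := by
  cases d with
  | zero => simp
  | succ d => rw [coeff_X_mul, coeff_derivative, Nat.cast_comm, Nat.cast_succ]

theorem Polynomial.derivative_X_add_one_pow {R : Type*} [CommSemiring R] (b : ℕ) :
    derivative ((X + 1 : R[X]) ^ b) = C (b : R) * (X + 1) ^ (b - 1) := by
  simpa using derivative_X_add_C_pow (1 : R) b

theorem Nat.descFactorial_two_mul_choose_sub_two (A : ℕ) {m : ℕ} (hm : 2 ≤ m) :
    A.descFactorial 2 * (A - 2).choose (m - 2) = m.descFactorial 2 * A.choose m := by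
  rw [descFactorial_eq_factorial_mul_choose, descFactorial_eq_factorial_mul_choose, mul_assoc,
    ← choose_mul hm]
  ring

theorem Finset.inclusion_exclusion_sum_filter_forall_not {ι α R : Type*} [Fintype ι]
    [DecidableEq ι] [Ring R] (S : Finset α) (P : ι → α → Prop) [∀ i x, Decidable (P i x)]
    (F : α → R) :
    ∑ x ∈ S with ∀ i, ¬P i x, F x =
      ∑ T : Finset ι, (-1) ^ #T * ∑ x ∈ S with ∀ i ∈ T, P i x, F x := by
  simp_rw [mul_sum, sum_filter]
  rw [sum_comm]
  refine sum_congr rfl fun x _ => ?_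
  have hT : univ.filter (fun T : Finset ι => ∀ i ∈ T, P i x) = (univ.filter (P · x)).powerset := by
    ext T; simp [subset_iff]
  have hsign := congrArg (Int.cast : ℤ → R)
    (sum_powerset_neg_one_pow_card (x := univ.filter (P · x)))
  push_cast at hsign
  rw [← sum_filter, hT, ← sum_mul, hsign]
  simp [filter_eq_empty_iff]

theorem sum_filter_pos_and_le_prod_choose_mul {ι R : Type*} [Fintype ι] [CommSemiring R]
    (S : Finset (ι → ℕ)) (n : ι → ℕ) (w : (ι → ℕ) → R) :
    ∑ f ∈ S with ∀ i, 0 < f i ∧ f i ≤ n i, (∏ i, ((n i).choose (f i) : R)) * w f =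
      ∑ f ∈ S with ∀ i, ¬f i = 0, (∏ i, ((n i).choose (f i) : R)) * w f := by
  rw [sum_filter, sum_filter]
  refine sum_congr rfl fun f _ => ?_
  by_cases hle : ∀ i, f i ≤ n i
  · simp [hle, Nat.pos_iff_ne_zero]
  · obtain ⟨i, hi⟩ : ∃ i, n i < f i := by simpa using hle
    have : ∏ i, ((n i).choose (f i) : R) = 0 :=
      prod_eq_zero (mem_univ i) (by simp [Nat.choose_eq_zero_of_lt hi])
    simp [this]

section

variable {ι : Type*} [DecidableEq ι] {j k : ι}

noncomputable def momentPoly (a : ι → ℕ) (j k : ι) (i : ι) : ℕ[X] :=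
  if i = j ∨ i = k then X * derivative ((X + 1) ^ a i) else (X + 1) ^ a i

theorem coeff_momentPoly (a : ι → ℕ) (i : ι) (d : ℕ) :
    (momentPoly a j k i).coeff d = (if i = j ∨ i = k then d else 1) * (a i).choose d := by
  unfold momentPoly
  split_ifs <;> simp [coeff_X_mul_derivative, coeff_X_add_one_pow]

variable [Fintype ι]

theorem Finset.add_le_sum_of_ne (a : ι → ℕ) (hjk : j ≠ k) : a j + a k ≤ ∑ i, a i := by
  rw [← sum_pair hjk]
  exact sum_le_sum_of_subset (subset_univ _)

theorem prod_coeff_momentPoly (a f : ι → ℕ) (hjk : j ≠ k) :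
    ∏ i, (momentPoly a j k i).coeff (f i) = (∏ i, (a i).choose (f i)) * (f j * f k) := by
  have hpair : univ.filter (fun i => i = j ∨ i = k) = {j, k} := by ext; simp
  simp only [coeff_momentPoly, prod_mul_distrib, prod_ite, hpair, prod_pair hjk, prod_const_one]
  ring

theorem prod_momentPoly (a : ι → ℕ) (hjk : j ≠ k) :
    ∏ i, momentPoly a j k i = C (a j * a k) * (X + 1) ^ (∑ i, a i - 2) * X ^ 2 := by
  have hpair : univ.filter (fun i => i = j ∨ i = k) = {j, k} := by ext; simp
  have hsum : ∑ i, a i = a j + a k + ∑ i ∈ univ.filter (fun i => ¬(i = j ∨ i = k)), a i := by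
    rw [← sum_filter_add_sum_filter_not univ (fun i => i = j ∨ i = k), hpair, sum_pair hjk]
  simp only [momentPoly]
  rw [prod_ite, hpair, prod_pair hjk, prod_pow_eq_pow_sum, derivative_X_add_one_pow,
    derivative_X_add_one_pow, hsum, Nat.cast_id, Nat.cast_id]
  obtain hj | hj := Nat.eq_zero_or_pos (a j)
  · simp [hj]
  obtain hk | hk := Nat.eq_zero_or_pos (a k)
  · simp [hk]
  rw [show ∀ r, a j + a k + r - 2 = (a j - 1) + (a k - 1) + r by omega, pow_add, pow_add, C_mul]
  ring

theorem sum_prod_choose_mul_mul (a : ι → ℕ) (m : ℕ) (hjk : j ≠ k) :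
    ∑ f ∈ univ.piAntidiag m, (∏ i, (a i).choose (f i)) * (f j * f k) =
      a j * a k * if 2 ≤ m then (∑ i, a i - 2).choose (m - 2) else 0 := by
  simp_rw [← prod_coeff_momentPoly a _ hjk, ← coeff_prod_eq_sum_piAntidiag, prod_momentPoly a hjk,
    coeff_mul_X_pow', coeff_C_mul, coeff_X_add_one_pow, Nat.cast_id, mul_ite, mul_zero]

theorem sum_prod_choose_mul_mul_eq_div (a : ι → ℕ) (m : ℕ) (hjk : j ≠ k) :
    ∑ f ∈ univ.piAntidiag m, (∏ i, ((a i).choose (f i) : ℚ)) * ((f j : ℚ) * (f k : ℚ)) =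
      (a j : ℚ) * (a k : ℚ) * (m.descFactorial 2 : ℚ) / ((∑ i, a i).descFactorial 2 : ℕ) *
        ((∑ i, a i).choose m : ℚ) := by
  have h := congrArg (Nat.cast : ℕ → ℚ) (sum_prod_choose_mul_mul a m hjk)
  push_cast at h
  rw [h]
  split_ifs with hm
  · by_cases h0 : a j * a k = 0
    · rcases Nat.mul_eq_zero.mp h0 with h0 | h0 <;> simp [h0]
    have hA : 2 ≤ ∑ i, a i := by
      have := Finset.add_le_sum_of_ne a hjk
      rcases Nat.mul_ne_zero_iff.mp h0 with ⟨_, _⟩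
      omega
    have hD : ((∑ i, a i).descFactorial 2 : ℚ) ≠ 0 := by
      exact_mod_cast (Nat.descFactorial_eq_zero_iff_lt.not.mpr (by omega))
    have hq : ((∑ i, a i).descFactorial 2 : ℚ) * ((∑ i, a i - 2).choose (m - 2) : ℕ) =
        m.descFactorial 2 * (∑ i, a i).choose m := by
      exact_mod_cast Nat.descFactorial_two_mul_choose_sub_two _ hm
    field_simp
    linear_combination (a j : ℚ) * a k * hq
  · rw [Nat.descFactorial_eq_zero_iff_lt.mpr (by omega : m < 2)]
    simp

theorem prod_choose_piecewise_zero {R : Type*} [CommSemiring R] (T : Finset ι) (n f : ι → ℕ) :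
    ∏ i, ((T.piecewise (fun _ => 0) n i).choose (f i) : R) =
      if ∀ i ∈ T, f i = 0 then ∏ i, ((n i).choose (f i) : R) else 0 := by
  split_ifs with h
  · refine prod_congr rfl fun i _ => ?_
    by_cases hi : i ∈ T
    · simp [hi, h i hi]
    · simp [hi]
  · obtain ⟨i, hi, hfi⟩ : ∃ i ∈ T, f i ≠ 0 := by simpa using h
    exact prod_eq_zero (mem_univ i)
      (by simp [hi, Nat.choose_eq_zero_of_lt (Nat.pos_of_ne_zero hfi)])

theorem sum_piecewise_zero (T : Finset ι) (n : ι → ℕ) :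
    ∑ i, T.piecewise (fun _ => 0) n i = ∑ i, n i - ∑ i ∈ T, n i := by
  have := sum_compl_add_sum T n
  rw [sum_piecewise]
  simp only [sum_const_zero, zero_add, ← compl_eq_univ_sdiff]
  omega

theorem sum_pos_prod_choose_mul_mul (n : ι → ℕ) (m : ℕ) (hjk : j ≠ k) :
    ∑ f ∈ univ.piAntidiag m with ∀ i, 0 < f i ∧ f i ≤ n i,
        (∏ i, ((n i).choose (f i) : ℚ)) * ((f j : ℚ) * (f k : ℚ)) =
      ∑ T : Finset ι with j ∉ T ∧ k ∉ T, (-1) ^ #T *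
        ((n j : ℚ) * n k * m.descFactorial 2 / ((∑ i, n i - ∑ i ∈ T, n i).descFactorial 2 : ℕ) *
          ((∑ i, n i - ∑ i ∈ T, n i).choose m : ℚ)) := by
  rw [sum_filter_pos_and_le_prod_choose_mul, inclusion_exclusion_sum_filter_forall_not]
  have hzero (T : Finset ι) :
      ∑ f ∈ univ.piAntidiag m with ∀ i ∈ T, f i = 0,
          (∏ i, ((n i).choose (f i) : ℚ)) * ((f j : ℚ) * (f k : ℚ)) =
        ∑ f ∈ univ.piAntidiag m,
          (∏ i, ((T.piecewise (fun _ => 0) n i).choose (f i) : ℚ)) * ((f j : ℚ) * (f k : ℚ)) := by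
    simp_rw [sum_filter, prod_choose_piecewise_zero, ite_mul, zero_mul]
  simp_rw [hzero, sum_prod_choose_mul_mul_eq_div _ m hjk, sum_piecewise_zero]
  rw [← sum_filter_of_ne (p := fun T => j ∉ T ∧ k ∉ T)]
  · refine sum_congr rfl fun T hT => ?_
    obtain ⟨hjT, hkT⟩ := (mem_filter.mp hT).2
    rw [piecewise_eq_of_notMem _ _ _ hjT, piecewise_eq_of_notMem _ _ _ hkT]
  · intro T _ hT
    constructor <;> intro hmem <;> simp [hmem] at hT

end

theorem stmt5 (L : ℕ) (n : Fin L → ℕ) (m : ℕ) (j k : Fin L) (hjk : j ≠ k) :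
    ∑ f ∈ (Finset.Nat.antidiagonalTuple L m).filter (fun f => ∀ i, 0 < f i ∧ f i ≤ n i),
      ((∏ i, (Nat.choose (n i) (f i) : ℚ)) / (Nat.choose (∑ i, n i) m : ℚ)) *
        ((f j : ℚ) * (f k : ℚ)) =
    ∑ T ∈ (Finset.univ : Finset (Finset (Fin L))).filter (fun T => j ∉ T ∧ k ∉ T),
      (-1 : ℚ) ^ T.card *
        ((n j : ℚ) * (n k : ℚ) * (Nat.descFactorial m 2 : ℚ) /
            ((Nat.descFactorial (∑ i, n i - ∑ i ∈ T, n i) 2 : ℕ) : ℚ)) *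
        ((Nat.choose (∑ i, n i - ∑ i ∈ T, n i) m : ℚ) / (Nat.choose (∑ i, n i) m : ℚ)) := by
  rw [← piAntidiag_univ_fin_eq_antidiagonalTuple]
  simp_rw [div_mul_eq_mul_div]
  rw [← sum_div]
  -- `convert`, not `rw`: over `Fin L` the filter carries a different `Decidable (∀ i, _)` instance
  convert congrArg (· / ((∑ i, n i).choose m : ℚ)) (sum_pos_prod_choose_mul_mul n m hjk) using 1
  · congr!
  · rw [sum_div]
    exact sum_congr rfl fun T _ => by ring
end

section
/- In the urn process started with two observed colors a and b (n_a and n_b balls respectively, n = n_a + n_b), the probability that color b is killed before color a (so that a is the root of the generated tree) equals n_a/n. -/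
/-!
The proportion `x / (x + y)` of balls of colour `a` is a martingale for the urn: drawing a ball
of colour `a` (probability `x / (x + y)`) or of colour `b` leaves it unchanged in expectation.
Hence it satisfies the same one-step recursion and the same boundary values as the survival
probability, and induction on the number of balls shows that the two coincide.
-/

theorem proportion_eq_expected_proportion_after_draw (x y : ℕ) (hx : 0 < x) (hy : 0 < y) :
    (x : ℚ) / (x + y) =
      (x : ℚ) / (x + y) * (((x - 1 : ℕ) : ℚ) / ((x - 1 : ℕ) + y)) +
        (y : ℚ) / (x + y) * ((x : ℚ) / (x + (y - 1 : ℕ))) := by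
  obtain ⟨m, rfl⟩ : ∃ m, x = m + 1 := ⟨x - 1, by omega⟩
  obtain ⟨k, rfl⟩ : ∃ k, y = k + 1 := ⟨y - 1, by omega⟩
  simp only [Nat.add_sub_cancel]
  push_cast
  have h₁ : (m : ℚ) + 1 + (k + 1) ≠ 0 := by positivity
  have h₂ : (m : ℚ) + (k + 1) ≠ 0 := by positivity
  have h₃ : (m : ℚ) + 1 + k ≠ 0 := by positivity
  field_simp
  ring

theorem eq_proportion_of_urn_recursion (g : ℕ → ℕ → ℚ)
    (hb1 : ∀ x, 0 < x → g x 0 = 1)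
    (hb2 : ∀ y, 0 < y → g 0 y = 0)
    (hrec : ∀ x y, 0 < x → 0 < y →
      g x y = ((x : ℚ) / ((x : ℚ) + y)) * g (x - 1) y +
        ((y : ℚ) / ((x : ℚ) + y)) * g x (y - 1))
    (x y : ℕ) (hxy : 0 < x + y) :
    g x y = (x : ℚ) / (x + y) := by
  induction hn : x + y generalizing x y with
  | zero => omega
  | succ n ih =>
    rcases Nat.eq_zero_or_pos x with rfl | hx
    · simp [hb2 y (by omega)]
    rcases Nat.eq_zero_or_pos y with rfl | hy
    · simp [hb1 x hx, (Nat.cast_pos.mpr hx).ne']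
    rw [hrec x y hx hy, ih (x - 1) y (by omega) (by omega), ih x (y - 1) (by omega) (by omega),
      ← proportion_eq_expected_proportion_after_draw x y hx hy]

theorem stmt7_general (g : ℕ → ℕ → ℚ)
    (hb1 : ∀ x, 0 < x → g x 0 = 1)
    (hb2 : ∀ y, 0 < y → g 0 y = 0)
    (hrec : ∀ x y, 0 < x → 0 < y →
      g x y = ((x : ℚ) / ((x : ℚ) + y)) * g (x - 1) y +
        ((y : ℚ) / ((x : ℚ) + y)) * g x (y - 1))
    (na nb : ℕ) (hna : 0 < na) :
    g na nb = (na : ℚ) / ((na : ℚ) + nb) :=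
  eq_proportion_of_urn_recursion g hb1 hb2 hrec na nb (by omega)

/-- In the two-color urn process, `g x y` is the probability that color `b` (with `y` balls)
is killed before color `a` (with `x` balls), so that `a` is the root of the generated tree.
It satisfies the one-step recursion of the urn process; the theorem asserts that the
probability that `a` survives, started from `(n_a, n_b)`, is `n_a / (n_a + n_b)`. -/
theorem stmt7 (g : ℕ → ℕ → ℚ)
    (hb1 : ∀ x, 0 < x → g x 0 = 1)
    (hb2 : ∀ y, 0 < y → g 0 y = 0)
    (hrec : ∀ x y, 0 < x → 0 < y →
      g x y = ((x : ℚ) / ((x : ℚ) + y)) * g (x - 1) y +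
        ((y : ℚ) / ((x : ℚ) + y)) * g x (y - 1))
    (na nb : ℕ) (hna : 0 < na) (hnb : 0 < nb) :
    g na nb = (na : ℚ) / ((na : ℚ) + nb) :=
  stmt7_general g hb1 hb2 hrec na nb hna
end

section
/- In the urn process with three colors a, b, c, the probability that color a becomes the interior vertex of the (undirected) tree generated by the process — i.e., that a is chosen as the parent of the first color killed — equals n_a/n, where n = n_a + n_b + n_c. -/
/-!
The proportion `x / (x + y + z)` of colour `a` is a martingale for the urn up to the first
killing, and at that moment its value is exactly the probability that `a` is chosen as the parent:
a killing removes the last ball of `b` or `c`, and the duplicated ball is then of colour `a` with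
probability `x / (x + y + z - 1)`, the proportion of `a` after the removal. Hence `h` and the
proportion satisfy the same recursion, and they agree by induction on the number of balls.
-/

theorem proportion_eq_expected_proportion_after_removal {K : Type*} [Field K] (x y z : K)
    (hs : x + y + z - 1 ≠ 0) :
    x / (x + y + z) * ((x - 1) / (x + y + z - 1)) + y / (x + y + z) * (x / (x + y + z - 1)) +
      z / (x + y + z) * (x / (x + y + z - 1)) = x / (x + y + z) := by
  rcases eq_or_ne (x + y + z) 0 with h0 | h0
  · simp [h0]
  · field_simp
    ring

/-- In the three-color urn process, `h x y z` is the probability that color `a` is chosen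
as the parent of the first color killed (i.e., `a` becomes the interior vertex of the
undirected tree generated by the process), started from `x, y, z` balls of colors
`a, b, c` respectively.  It satisfies the one-step recursion of the urn process:
if a color with a single ball loses that ball, it is killed and the parent is a
uniformly random remaining ball.  The theorem asserts `h n_a n_b n_c = n_a / n`. -/
theorem stmt8 (h : ℕ → ℕ → ℕ → ℚ)
    (hrec : ∀ x y z : ℕ, 0 < x → 0 < y → 0 < z →
      h x y z = ((x : ℚ) / ((x : ℚ) + y + z)) * (if 2 ≤ x then h (x - 1) y z else 0) +
        ((y : ℚ) / ((x : ℚ) + y + z)) *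
          (if 2 ≤ y then h x (y - 1) z else (x : ℚ) / ((x : ℚ) + y + z - 1)) +
        ((z : ℚ) / ((x : ℚ) + y + z)) *
          (if 2 ≤ z then h x y (z - 1) else (x : ℚ) / ((x : ℚ) + y + z - 1)))
    (na nb nc : ℕ) (ha : 0 < na) (hb : 0 < nb) (hc : 0 < nc) :
    h na nb nc = (na : ℚ) / ((na : ℚ) + nb + nc) := by
  suffices key : ∀ n x y z : ℕ, x + y + z = n → 0 < x → 0 < y → 0 < z →
      h x y z = (x : ℚ) / ((x : ℚ) + y + z) from key _ na nb nc rfl ha hb hc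
  intro n
  induction n using Nat.strong_induction_on with
  | _ n ih =>
  rintro x y z rfl hx hy hz
  have hs : (x : ℚ) + y + z - 1 ≠ 0 := by
    have : (1 : ℚ) ≤ x := by exact_mod_cast hx
    have : (0 : ℚ) < y := by exact_mod_cast hy
    have : (0 : ℚ) ≤ z := by positivity
    linarith
  have step_a : (if 2 ≤ x then h (x - 1) y z else 0) = ((x : ℚ) - 1) / ((x : ℚ) + y + z - 1) := by
    split_ifs with hx2
    · rw [ih _ (by omega) _ y z rfl (by omega) hy hz, Nat.cast_pred hx]
      ring_nf
    · simp [show x = 1 by omega]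
  have step_b : (if 2 ≤ y then h x (y - 1) z else (x : ℚ) / ((x : ℚ) + y + z - 1)) =
      (x : ℚ) / ((x : ℚ) + y + z - 1) := by
    split_ifs
    · rw [ih _ (by omega) x _ z rfl hx (by omega) hz, Nat.cast_pred hy]
      ring_nf
    · rfl
  have step_c : (if 2 ≤ z then h x y (z - 1) else (x : ℚ) / ((x : ℚ) + y + z - 1)) =
      (x : ℚ) / ((x : ℚ) + y + z - 1) := by
    split_ifs
    · rw [ih _ (by omega) x y _ rfl hx hy (by omega), Nat.cast_pred hz]
      ring_nf
    · rfl
  rw [hrec x y z hx hy hz, step_a, step_b, step_c]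
  exact proportion_eq_expected_proportion_after_removal _ _ _ hs
end

section
/- Define R(n) on configurations n (over K colors) by R(n) = π_a when n is supported on a single color a, and for configurations with more than one observed color by the recursion R(n) = Σ_{i ≠ j in O_n} P_{ji} Σ_{m: 0 < m ≤ n, m_i = 1} [Π_k C(n_k,m_k)/C(n,|m|)] · m_j R(m - e_i + e_j) / (|m|(|m|-1)). Then R(n) = E_n[f_P(T)], where T is the random rooted tree on the observed colors O_n generated by the urn process and f_P(T) = π_{ρ(T)} Π_{(j→i) ∈ E(T)} P_{ji}. -/
open scoped Classical

/-- The support (set of observed colors) of a configuration. -/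
def supp {K : ℕ} (n : Fin K → ℕ) : Finset (Fin K) :=
  Finset.univ.filter fun i => 0 < n i

/-- `n - e_i`: remove one ball of color `i`. -/
def rm {K : ℕ} (n : Fin K → ℕ) (i : Fin K) : Fin K → ℕ :=
  fun k => n k - if k = i then 1 else 0

/-- `n - e_i + e_j`: replace a ball of color `i` by one of color `j`. -/
def mv {K : ℕ} (n : Fin K → ℕ) (i j : Fin K) : Fin K → ℕ :=
  fun k => n k - (if k = i then 1 else 0) + if k = j then 1 else 0

/-- A rooted tree on a subset of colors: a root together with a parent function. -/
abbrev RTree (K : ℕ) := Fin K × (Fin K → Fin K)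

/-- `T` is a rooted tree on the vertex set `S`. -/
def IsTreeOn {K : ℕ} (S : Finset (Fin K)) (T : RTree K) : Prop :=
  T.1 ∈ S ∧ T.2 T.1 = T.1 ∧ (∀ i, i ∉ S → T.2 i = i) ∧ (∀ i ∈ S, T.2 i ∈ S) ∧
    ∀ i ∈ S, ∃ k ∈ Finset.range (K + 1), T.2^[k] i = T.1

/-- Remove the leaf `i` from the tree `T`. -/
def rmLeaf {K : ℕ} (T : RTree K) (i : Fin K) : RTree K :=
  (T.1, fun k => if k = i then i else T.2 k)

/-- `f_P(T) = π_{ρ(T)} ∏_{(j → i) ∈ E(T)} P_{ji}` for a tree `T` on vertex set `S`. -/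
def fP {K : ℕ} (P : Fin K → Fin K → ℚ) (pI : Fin K → ℚ) (S : Finset (Fin K))
    (T : RTree K) : ℚ :=
  pI T.1 * ∏ i ∈ S.erase T.1, P (T.2 i) i

/-! Both sides solve the same recursion with the same one-color boundary values, and that
recursion has a unique solution by induction on the number of colors.

For the expectation `E(n) = E_n[f_P(T)]`, conditioning on the first urn step writes `E(n)` as an
average of `E(n - e_i)` (a ball of color `i` is removed, `n_i ≥ 2`) and of
`P_{ji} E(n - e_i + e_j)` (color `i` is killed by `j`): removing the leaf `i` of a tree with edge
`j → i` factors `f_P` as `P_{ji}` times `f_P` of the smaller tree. The right-hand side of the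
recursion for `R`, evaluated at `E`, satisfies the same one-step equation, because a
hypergeometric sample of `M < N` balls from `n` is a sample from `n` with one uniformly random
ball removed. Induction on `N` then shows that `E` solves the recursion for `R`. -/

open Finset

lemma Function.iterate_eq_of_eqOn {α : Type*} {f g : α → α} {s : Set α} (hf : Set.MapsTo f s s)
    (hfg : Set.EqOn f g s) {x : α} (hx : x ∈ s) (t : ℕ) : f^[t] x = g^[t] x := by
  induction t with
  | zero => rfl
  | succ t ih =>
    rw [Function.iterate_succ_apply', Function.iterate_succ_apply', ← ih, hfg (hf.iterate t hx)]

lemma Function.exists_iterate_eq_lt_card {α : Type*} {f : α → α} {s : Finset α}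
    {x r : α} (hs : ∀ t, f^[t] x ∈ s) (hk : ∃ k, f^[k] x = r) :
    ∃ k < s.card, f^[k] x = r := by
  refine ⟨Nat.find hk, ?_, Nat.find_spec hk⟩
  set k := Nat.find hk
  -- a repetition `f^[a] x = f^[b] x` with `a < b ≤ k` would reach `r` before step `k`
  have hne : ∀ a b, a < b → b ≤ k → f^[a] x ≠ f^[b] x := by
    intro a b hab hbk he
    have : f^[a + (k - b)] x = r := by
      rw [add_comm, Function.iterate_add_apply, he, ← Function.iterate_add_apply,
        Nat.sub_add_cancel hbk, Nat.find_spec hk]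
    exact Nat.find_min hk (show a + (k - b) < k by omega) this
  have hinj : Set.InjOn (fun t => f^[t] x) (range (k + 1) : Set ℕ) := by
    intro a ha b hb hab
    simp only [coe_range, Set.mem_Iio] at ha hb
    rcases lt_trichotomy a b with h | h | h
    · exact absurd hab (hne a b h (by omega))
    · exact h
    · exact absurd hab.symm (hne b a h (by omega))
  simpa using card_le_card_of_injOn _ (fun t _ => hs t) hinj

lemma Nat.cast_choose_pred_mul {R : Type*} [CommRing R] {a b : ℕ} (h : b ≤ a) :
    ((a - 1).choose b : R) * a = a.choose b * ((a : R) - b) := by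
  rcases Nat.eq_zero_or_pos a with rfl | ha
  · obtain rfl : b = 0 := by omega
    simp
  obtain ⟨c, rfl⟩ : ∃ c, a = c + 1 := ⟨a - 1, by omega⟩
  have := congrArg (Nat.cast : ℕ → R) (Nat.choose_mul_succ_eq c b)
  push_cast [Nat.cast_sub h] at this
  simpa using this

lemma Finset.sum_pi_fin_eq_sum_Iic {ι M : Type*} [Fintype ι] [DecidableEq ι] [AddCommMonoid M]
    (n : ι → ℕ) (φ : (ι → ℕ) → M) :
    ∑ g : (∀ k, Fin (n k + 1)), φ (fun k => (g k : ℕ)) = ∑ m ∈ Iic n, φ m := by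
  refine sum_nbij' (fun g k => (g k : ℕ)) (fun m k => ⟨min (m k) (n k), by omega⟩)
    (fun g _ => mem_Iic.2 fun k => Nat.lt_succ_iff.1 (g k).isLt) (fun _ _ => mem_univ _)
    (fun g _ => funext fun k => Fin.ext (min_eq_left (Nat.lt_succ_iff.1 (g k).isLt)))
    (fun m hm => funext fun k => min_eq_left (mem_Iic.1 hm k)) fun _ _ => rfl

section Configurations

variable {K : ℕ}

lemma mem_supp {n : Fin K → ℕ} {i : Fin K} : i ∈ supp n ↔ 0 < n i := by
  simp [supp]

lemma supp_eq_supp_iff {m n : Fin K → ℕ} : supp m = supp n ↔ ∀ k, (0 < m k ↔ 0 < n k) := by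
  simp [Finset.ext_iff, mem_supp]

lemma rm_self (n : Fin K → ℕ) (i : Fin K) : rm n i i = n i - 1 := by
  simp [rm]

lemma rm_of_ne (n : Fin K → ℕ) {i k : Fin K} (h : k ≠ i) : rm n i k = n k := by
  simp [rm, h]

lemma rm_le (n : Fin K → ℕ) (i : Fin K) : rm n i ≤ n :=
  fun _ => Nat.sub_le _ _

lemma supp_rm {n : Fin K → ℕ} {i : Fin K} (h : 2 ≤ n i) : supp (rm n i) = supp n := by
  rw [supp_eq_supp_iff]
  intro k
  rcases eq_or_ne k i with rfl | hk
  · rw [rm_self]; omega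
  · rw [rm_of_ne n hk]

lemma sum_rm {n : Fin K → ℕ} {i : Fin K} (h : 0 < n i) : ∑ k, rm n i k + 1 = ∑ k, n k := by
  have hsplit : ∀ k, rm n i k + (if k = i then 1 else 0) = n k := by
    intro k
    rcases eq_or_ne k i with rfl | hk
    · rw [rm_self, if_pos rfl]; omega
    · rw [rm_of_ne n hk, if_neg hk, add_zero]
  simp_rw [← hsplit, Finset.sum_add_distrib, Finset.sum_ite_eq', if_pos (mem_univ i)]

lemma sum_mv {n : Fin K → ℕ} {i : Fin K} (j : Fin K) (h : 0 < n i) :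
    ∑ k, mv n i j k = ∑ k, n k := by
  change ∑ k, (rm n i k + if k = j then 1 else 0) = _
  rw [Finset.sum_add_distrib, Finset.sum_ite_eq', if_pos (mem_univ j), sum_rm h]

lemma supp_mv {n : Fin K → ℕ} {i j : Fin K} (hi : n i = 1) (hj : j ∈ (supp n).erase i) :
    supp (mv n i j) = (supp n).erase i := by
  obtain ⟨hji, hj⟩ := Finset.mem_erase.1 hj
  ext k
  simp only [mem_erase, mem_supp, mv] at hj ⊢
  rcases eq_or_ne k i with rfl | hk
  · simp [hi, hji.symm]
  · rcases eq_or_ne k j with rfl | hkj <;> simp [*]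

lemma eq_ite_of_supp_eq_singleton {n : Fin K → ℕ} {a : Fin K} (h : supp n = {a}) :
    n = fun k => if k = a then n a else 0 := by
  funext k
  rcases eq_or_ne k a with rfl | hk
  · rw [if_pos rfl]
  · rw [if_neg hk]
    by_contra hnk
    exact hk (Finset.mem_singleton.1 (h ▸ mem_supp.2 (Nat.pos_of_ne_zero hnk)))

end Configurations

section Trees

variable {K : ℕ}

lemma isTreeOn_singleton (a : Fin K) : IsTreeOn {a} ((a, fun k => k) : RTree K) :=
  ⟨mem_singleton_self a, rfl, fun _ _ => rfl, fun _ hi => hi,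
    fun i hi => ⟨0, by simp, by simpa using hi⟩⟩

def addLeaf (T : RTree K) (i j : Fin K) : RTree K :=
  (T.1, Function.update T.2 i j)

lemma rmLeaf_addLeaf {T : RTree K} {i : Fin K} (j : Fin K) (h : T.2 i = i) :
    rmLeaf (addLeaf T i j) i = T := by
  refine Prod.ext rfl (funext fun k => ?_)
  rcases eq_or_ne k i with rfl | hk
  · simp [rmLeaf, h]
  · simp [rmLeaf, addLeaf, hk]

lemma addLeaf_rmLeaf {T : RTree K} {i j : Fin K} (h : T.2 i = j) :
    addLeaf (rmLeaf T i) i j = T := by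
  refine Prod.ext rfl (funext fun k => ?_)
  rcases eq_or_ne k i with rfl | hk
  · simp [addLeaf, h]
  · simp [rmLeaf, addLeaf, hk]

lemma isTreeOn_of_rmLeaf {S : Finset (Fin K)} {T : RTree K} {i j : Fin K} (hi : i ∈ S)
    (hj : j ∈ S.erase i) (hij : T.2 i = j) (h : IsTreeOn (S.erase i) (rmLeaf T i)) :
    IsTreeOn S T := by
  obtain ⟨hroot, hfix, hout, hmaps, hreach⟩ := h
  have hagree : Set.EqOn (rmLeaf T i).2 T.2 (S.erase i : Set (Fin K)) :=
    fun k hk => if_neg (mem_erase.1 hk).1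
  have hmaps' : Set.MapsTo (rmLeaf T i).2 (S.erase i) (S.erase i) := fun k hk => hmaps k hk
  have hTmaps : ∀ k ∈ S, T.2 k ∈ S := by
    intro k hk
    rcases eq_or_ne k i with rfl | hki
    · exact hij ▸ mem_of_mem_erase hj
    · exact mem_of_mem_erase (hagree (mem_erase.2 ⟨hki, hk⟩) ▸ hmaps k (mem_erase.2 ⟨hki, hk⟩))
  have hTfix : T.2 T.1 = T.1 := hagree hroot ▸ hfix
  have hreachT : ∀ k ∈ S.erase i, ∃ t, T.2^[t] k = T.1 := fun k hk =>
    let ⟨t, _, ht⟩ := hreach k hk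
    ⟨t, Function.iterate_eq_of_eqOn hmaps' hagree hk t ▸ ht⟩
  refine ⟨mem_of_mem_erase hroot, hTfix, fun k hk => ?_, hTmaps, fun k hk => ?_⟩
  · have hki : k ≠ i := fun h => hk (h ▸ hi)
    exact (if_neg hki).symm.trans (hout k fun h => hk (mem_of_mem_erase h))
  · have hreach_k : ∃ t, T.2^[t] k = T.1 := by
      rcases eq_or_ne k i with rfl | hki
      · obtain ⟨t, ht⟩ := hreachT j hj
        exact ⟨t + 1, by rw [Function.iterate_succ_apply, hij, ht]⟩
      · exact hreachT k (mem_erase.2 ⟨hki, hk⟩)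
    obtain ⟨t, ht, hkt⟩ := Function.exists_iterate_eq_lt_card
      (fun t => (Set.MapsTo.iterate (s := (S : Set (Fin K))) hTmaps t) hk) hreach_k
    have hcard : S.card ≤ K := (card_le_univ S).trans_eq (Fintype.card_fin K)
    exact ⟨t, mem_range.2 (by omega), hkt⟩

lemma fP_eq_mul_fP_rmLeaf (P : Fin K → Fin K → ℚ) (pI : Fin K → ℚ) {S : Finset (Fin K)}
    {T : RTree K} {i : Fin K} (hi : i ∈ S) (hroot : T.1 ≠ i) :
    fP P pI S T = P (T.2 i) i * fP P pI (S.erase i) (rmLeaf T i) := by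
  have hagree : ∀ k ∈ (S.erase i).erase T.1, P ((rmLeaf T i).2 k) k = P (T.2 k) k :=
    fun k hk => by simp only [rmLeaf]; rw [if_neg (mem_erase.1 (mem_of_mem_erase hk)).1]
  rw [fP, fP, ← mul_prod_erase _ _ (mem_erase.2 ⟨hroot.symm, hi⟩),
    show (rmLeaf T i).1 = T.1 from rfl, prod_congr rfl hagree, erase_right_comm]
  ring

end Trees

section Urn

variable {K : ℕ}

/-- One step of the urn: a ball of color `i` is removed with probability `n i / N`; if it was the
last one, a ball of color `j` is duplicated with probability `n j / (N - 1)`. -/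
noncomputable def urnStep (H : (Fin K → ℕ) → ℚ) (G : Fin K → Fin K → (Fin K → ℕ) → ℚ)
    (n : Fin K → ℕ) : ℚ :=
  ∑ i ∈ supp n, ((n i : ℚ) / ((∑ k, n k : ℕ) : ℚ)) *
    (if 2 ≤ n i then H (rm n i)
     else ∑ j ∈ (supp n).erase i, ((n j : ℚ) / (((∑ k, n k : ℕ) : ℚ) - 1)) * G i j (mv n i j))

lemma urnStep_congr {H H' : (Fin K → ℕ) → ℚ} (G : Fin K → Fin K → (Fin K → ℕ) → ℚ)
    {n : Fin K → ℕ} (h : ∀ i ∈ supp n, 2 ≤ n i → H (rm n i) = H' (rm n i)) :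
    urnStep H G n = urnStep H' G n := by
  refine sum_congr rfl fun i hi => ?_
  split_ifs with h2
  · rw [h i hi h2]
  · rfl

lemma sum_urnStep_mul {ι : Type*} [Fintype ι] (H : ι → (Fin K → ℕ) → ℚ)
    (G : ι → Fin K → Fin K → (Fin K → ℕ) → ℚ) (w : ι → ℚ) (n : Fin K → ℕ) :
    ∑ t, urnStep (H t) (G t) n * w t =
      urnStep (fun m => ∑ t, H t m * w t) (fun i j m => ∑ t, G t i j m * w t) n := by
  simp only [urnStep, sum_mul]
  rw [sum_comm]
  refine sum_congr rfl fun i _ => ?_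
  split_ifs
  · simp only [mul_sum, mul_assoc]
  · simp only [mul_sum, sum_mul, mul_assoc]
    rw [sum_comm]

end Urn

section Expectation

variable {K : ℕ} (P : Fin K → Fin K → ℚ) (pI : Fin K → ℚ)

noncomputable def expectedFP (Pn : (Fin K → ℕ) → RTree K → ℚ) (n : Fin K → ℕ) : ℚ :=
  ∑ T : RTree K, if IsTreeOn (supp n) T then Pn n T * fP P pI (supp n) T else 0

lemma expectedFP_eq_sum_mul (Pn : (Fin K → ℕ) → RTree K → ℚ) (n : Fin K → ℕ) :
    expectedFP P pI Pn n =
      ∑ T : RTree K, Pn n T * if IsTreeOn (supp n) T then fP P pI (supp n) T else 0 := by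
  simp only [expectedFP, mul_ite, mul_zero]

lemma expectedFP_of_supp_eq_singleton {Pn : (Fin K → ℕ) → RTree K → ℚ}
    (hbase : ∀ (n : Fin K → ℕ) (a : Fin K), supp n = {a} →
      ∀ T : RTree K, Pn n T = if T = (a, fun k => k) then 1 else 0)
    {n : Fin K → ℕ} {a : Fin K} (ha : supp n = {a}) : expectedFP P pI Pn n = pI a := by
  rw [expectedFP_eq_sum_mul, Fintype.sum_eq_single ((a, fun k => k) : RTree K) fun T hT => by
    rw [hbase n a ha, if_neg hT, zero_mul]]
  rw [hbase n a ha, if_pos rfl, ha, if_pos (isTreeOn_singleton a), fP, erase_singleton,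
    prod_empty, one_mul, mul_one]

lemma eq_zero_of_not_isTreeOn {Pn : (Fin K → ℕ) → RTree K → ℚ}
    (hbase : ∀ (n : Fin K → ℕ) (a : Fin K), supp n = {a} →
      ∀ T : RTree K, Pn n T = if T = (a, fun k => k) then 1 else 0)
    (hstep : ∀ n : Fin K → ℕ, 2 ≤ (supp n).card → ∀ T : RTree K,
      Pn n T = urnStep (Pn · T) (fun i j m => if T.2 i = j then Pn m (rmLeaf T i) else 0) n)
    {n : Fin K → ℕ} (hn : (supp n).Nonempty) {T : RTree K} (hT : ¬ IsTreeOn (supp n) T) :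
    Pn n T = 0 := by
  -- an urn step lowers either the number of balls or the number of colors
  induction hN : ∑ k, n k + (supp n).card using Nat.strong_induction_on generalizing n T with
  | _ N ih =>
  rcases Nat.lt_or_ge (supp n).card 2 with h1 | h2
  · obtain ⟨a, ha⟩ := card_eq_one.1 (show (supp n).card = 1 by have := hn.card_pos; omega)
    rw [hbase n a ha T, if_neg]
    rintro rfl
    exact hT (by rw [ha]; exact isTreeOn_singleton a)
  · rw [hstep n h2 T]
    refine sum_eq_zero fun i hi => mul_eq_zero_of_right _ ?_
    have hi' := mem_supp.1 hi
    split_ifs with h2i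
    · have hsupp := supp_rm h2i
      refine ih _ ?_ (hsupp ▸ hn) (hsupp ▸ hT) rfl
      rw [hsupp]
      have := sum_rm hi'
      omega
    · refine sum_eq_zero fun j hj => mul_eq_zero_of_right _ ?_
      dsimp only
      split_ifs with hij
      · have hsupp := supp_mv (by omega : n i = 1) hj
        refine ih _ ?_ (hsupp ▸ ⟨j, hj⟩) (hsupp ▸ fun h => hT (isTreeOn_of_rmLeaf hi hj hij h)) rfl
        rw [sum_mv j hi', hsupp, card_erase_of_mem hi]
        omega
      · rfl

lemma sum_rmLeaf_mul {S : Finset (Fin K)} {i j : Fin K} (hi : i ∈ S) (hj : j ∈ S.erase i)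
    (Q : RTree K → ℚ) (hQ : ∀ T, ¬ IsTreeOn (S.erase i) T → Q T = 0) :
    ∑ T : RTree K, (if T.2 i = j then Q (rmLeaf T i) else 0) *
        (if IsTreeOn S T then fP P pI S T else 0) =
      P j i * ∑ T : RTree K, Q T * if IsTreeOn (S.erase i) T then fP P pI (S.erase i) T else 0 := by
  have hfix : ∀ T, IsTreeOn (S.erase i) T → T.2 i = i := fun T hT =>
    hT.2.2.1 i (notMem_erase i S)
  have hR :
      ∑ T : RTree K, P j i * (Q T * if IsTreeOn (S.erase i) T then fP P pI (S.erase i) T else 0) =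
        ∑ T with T.2 i = i,
          P j i * (Q T * if IsTreeOn (S.erase i) T then fP P pI (S.erase i) T else 0) := by
    refine (sum_filter_of_ne fun T _ h => ?_).symm
    by_contra hTi
    exact h (by rw [if_neg (mt (hfix T) hTi), mul_zero, mul_zero])
  rw [mul_sum, hR]
  simp only [ite_mul, zero_mul]
  rw [← sum_filter]
  refine sum_nbij' (rmLeaf · i) (addLeaf · i j) (fun T _ => by simp [rmLeaf])
    (fun T _ => by simp [addLeaf]) (fun T hT => addLeaf_rmLeaf (mem_filter.1 hT).2)
    (fun T hT => rmLeaf_addLeaf j (mem_filter.1 hT).2) fun T hT => ?_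
  have hij := (mem_filter.1 hT).2
  by_cases htree : IsTreeOn (S.erase i) (rmLeaf T i)
  · rw [if_pos (isTreeOn_of_rmLeaf hi hj hij htree), if_pos htree,
      fP_eq_mul_fP_rmLeaf P pI (T := T) hi (mem_erase.1 htree.1).1, hij]
    ring
  · rw [hQ _ htree, zero_mul, zero_mul, mul_zero]

lemma expectedFP_eq_urnStep {Pn : (Fin K → ℕ) → RTree K → ℚ}
    (hbase : ∀ (n : Fin K → ℕ) (a : Fin K), supp n = {a} →
      ∀ T : RTree K, Pn n T = if T = (a, fun k => k) then 1 else 0)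
    (hstep : ∀ n : Fin K → ℕ, 2 ≤ (supp n).card → ∀ T : RTree K,
      Pn n T = urnStep (Pn · T) (fun i j m => if T.2 i = j then Pn m (rmLeaf T i) else 0) n)
    {n : Fin K → ℕ} (hn : 2 ≤ (supp n).card) :
    expectedFP P pI Pn n =
      urnStep (expectedFP P pI Pn) (fun i j m => P j i * expectedFP P pI Pn m) n := by
  rw [expectedFP_eq_sum_mul, sum_congr rfl fun T _ => by rw [hstep n hn T], sum_urnStep_mul]
  refine sum_congr rfl fun i hi => congrArg _ ?_
  split_ifs with h2
  · rw [expectedFP_eq_sum_mul, supp_rm h2]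
  · refine sum_congr rfl fun j hj => congrArg _ ?_
    have hsupp := supp_mv (by have := mem_supp.1 hi; omega) hj
    dsimp only
    rw [expectedFP_eq_sum_mul, hsupp, sum_rmLeaf_mul P pI hi hj]
    exact fun T hT => eq_zero_of_not_isTreeOn hbase hstep (hsupp ▸ ⟨j, hj⟩) (hsupp ▸ hT)

end Expectation

section Hypergeometric

variable {K : ℕ}

/-- The probability `∏ₖ C(n k, m k) / C(N, M)` that `M` balls drawn without replacement from the
`N` balls of `n` form the configuration `m`. -/
def hyperWeight (n m : Fin K → ℕ) : ℚ :=
  (∏ k, ((n k).choose (m k) : ℚ)) / ((∑ k, n k).choose (∑ k, m k) : ℚ)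

lemma hyperWeight_self (n : Fin K → ℕ) : hyperWeight n n = 1 := by
  simp [hyperWeight]

lemma hyperWeight_eq_zero_of_not_le {n m : Fin K → ℕ} (h : ¬ m ≤ n) : hyperWeight n m = 0 := by
  obtain ⟨k, hk⟩ : ∃ k, n k < m k := by simpa [Pi.le_def] using h
  rw [hyperWeight, prod_eq_zero (mem_univ k) (by rw [Nat.choose_eq_zero_of_lt hk,
    Nat.cast_zero]), zero_div]

lemma mul_prod_choose_rm {n m : Fin K → ℕ} (hm : m ≤ n) (i : Fin K) :
    (n i : ℚ) * ∏ k, ((rm n i k).choose (m k) : ℚ) =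
      ((n i : ℚ) - m i) * ∏ k, ((n k).choose (m k) : ℚ) := by
  rw [← mul_prod_erase univ _ (mem_univ i),
    ← mul_prod_erase univ (fun k => ((n k).choose (m k) : ℚ)) (mem_univ i),
    prod_congr rfl fun k hk => by rw [rm_of_ne n (ne_of_mem_erase hk)], rm_self,
    ← mul_assoc, ← mul_assoc, mul_comm (n i : ℚ), Nat.cast_choose_pred_mul (hm i)]
  ring

/-- Drawing `M < N` balls from `n` is the same as first discarding one uniformly random ball. -/
lemma hyperWeight_eq_sum_rm {n m : Fin K → ℕ} (hm : m ≤ n) (hlt : ∑ k, m k < ∑ k, n k) :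
    hyperWeight n m =
      ∑ i ∈ supp n, ((n i : ℚ) / ((∑ k, n k : ℕ) : ℚ)) * hyperWeight (rm n i) m := by
  rw [hyperWeight]
  set N := ∑ k, n k
  set M := ∑ k, m k
  have hterm : ∀ i ∈ supp n, ((n i : ℚ) / (N : ℚ)) * hyperWeight (rm n i) m =
      ((n i : ℚ) - m i) * (∏ k, ((n k).choose (m k) : ℚ)) / (N * ((N - 1).choose M : ℚ)) := by
    intro i hi
    have hsum : ∑ k, rm n i k = N - 1 := by have := sum_rm (mem_supp.1 hi); omega
    rw [hyperWeight, hsum, div_mul_div_comm, mul_prod_choose_rm hm]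
  have hdiff : ∑ i ∈ supp n, ((n i : ℚ) - m i) = (N : ℚ) - M := by
    rw [sum_subset (subset_univ _) fun i _ hi => by
      have hn0 : n i = 0 := by simpa [mem_supp] using hi
      have hm0 : m i = 0 := Nat.le_zero.1 (hn0 ▸ hm i)
      simp [hn0, hm0], sum_sub_distrib]
    push_cast [N, M]
    rfl
  rw [sum_congr rfl hterm, ← sum_div, ← sum_mul, hdiff]
  have hC := Nat.cast_choose_pred_mul (R := ℚ) (show M ≤ N by omega)
  have hN : (N : ℚ) ≠ 0 := Nat.cast_ne_zero.2 (by omega)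
  have hC' : ((N - 1).choose M : ℚ) ≠ 0 := Nat.cast_ne_zero.2 (Nat.choose_pos (by omega)).ne'
  have hC'' : (N.choose M : ℚ) ≠ 0 := Nat.cast_ne_zero.2 (Nat.choose_pos (by omega)).ne'
  field_simp
  linear_combination (∏ k, ((n k).choose (m k) : ℚ)) * hC

end Hypergeometric

section Recursion

variable {K : ℕ}

def subsampleSum (n : Fin K → ℕ) (i : Fin K) (b : (Fin K → ℕ) → ℚ) : ℚ :=
  ∑ m ∈ Iic n, if supp m = supp n ∧ m i = 1 then hyperWeight n m * b m else 0

lemma sum_erase_ite_hyperWeight_rm (n : Fin K → ℕ) (i : Fin K) (b : (Fin K → ℕ) → ℚ)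
    {i' : Fin K} (hi' : i' ∈ supp n) :
    ∑ m ∈ (Iic n).erase n,
        (if supp m = supp n ∧ m i = 1 then hyperWeight (rm n i') m * b m else 0) =
      if 2 ≤ n i' then subsampleSum (rm n i') i b else 0 := by
  split_ifs with h2
  · rw [subsampleSum, supp_rm h2]
    symm
    refine sum_subset (fun m hm => mem_erase.2 ⟨?_, ?_⟩) fun m _ hm => ?_
    · intro he
      have : m i' ≤ rm n i' i' := mem_Iic.1 hm i'
      rw [rm_self, he] at this
      omega
    · exact mem_Iic.2 ((mem_Iic.1 hm).trans (rm_le n i'))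
    · rw [hyperWeight_eq_zero_of_not_le (mt mem_Iic.2 hm), zero_mul, ite_self]
  · refine sum_eq_zero fun m _ => ?_
    rw [ite_eq_right_iff]
    rintro ⟨hsupp, -⟩
    have hm : 0 < m i' := mem_supp.1 (hsupp ▸ hi')
    rw [hyperWeight_eq_zero_of_not_le fun hle => by
      have : m i' ≤ rm n i' i' := hle i'
      rw [rm_self] at this
      omega, zero_mul]

/-- Condition on the first ball removed from `n`. -/
lemma subsampleSum_eq (n : Fin K → ℕ) (i : Fin K) (b : (Fin K → ℕ) → ℚ) :
    subsampleSum n i b = (if n i = 1 then b n else 0) +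
      ∑ i' ∈ supp n, ((n i' : ℚ) / ((∑ k, n k : ℕ) : ℚ)) *
        (if 2 ≤ n i' then subsampleSum (rm n i') i b else 0) := by
  rw [subsampleSum, ← add_sum_erase _ _ (mem_Iic.2 le_rfl)]
  congr 1
  · simp [hyperWeight_self]
  · calc _ = ∑ m ∈ (Iic n).erase n, ∑ i' ∈ supp n, ((n i' : ℚ) / ((∑ k, n k : ℕ) : ℚ)) *
            (if supp m = supp n ∧ m i = 1 then hyperWeight (rm n i') m * b m else 0) := by
          refine sum_congr rfl fun m hm => ?_
          obtain ⟨hne, hle⟩ := mem_erase.1 hm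
          split_ifs
          · rw [hyperWeight_eq_sum_rm (mem_Iic.1 hle)
              (Fintype.sum_strictMono (lt_of_le_of_ne (mem_Iic.1 hle) hne)), sum_mul]
            exact sum_congr rfl fun _ _ => mul_assoc _ _ _
          · simp
      _ = _ := by
          rw [sum_comm]
          refine sum_congr rfl fun i' hi' => ?_
          rw [← mul_sum, sum_erase_ite_hyperWeight_rm n i b hi']

noncomputable def recursionRHS (P : Fin K → Fin K → ℚ) (G : (Fin K → ℕ) → ℚ) (n : Fin K → ℕ) : ℚ :=
  ∑ i ∈ supp n, ∑ j ∈ (supp n).erase i, P j i * subsampleSum n i fun m =>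
    (m j : ℚ) * G (mv m i j) / (((∑ k, m k : ℕ) : ℚ) * (((∑ k, m k : ℕ) : ℚ) - 1))

lemma recursionRHS_eq_urnStep (P : Fin K → Fin K → ℚ) (G : (Fin K → ℕ) → ℚ) (n : Fin K → ℕ) :
    recursionRHS P G n = urnStep (recursionRHS P G) (fun i j m => P j i * G m) n := by
  set N : ℚ := ((∑ k, n k : ℕ) : ℚ)
  have hsplit : recursionRHS P G n =
      ∑ i ∈ supp n, ∑ j ∈ (supp n).erase i,
          P j i * (if n i = 1 then (n j : ℚ) * G (mv n i j) / (N * (N - 1)) else 0) +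
        ∑ i ∈ supp n, (n i : ℚ) / N * (if 2 ≤ n i then recursionRHS P G (rm n i) else 0) := by
    rw [recursionRHS]
    simp only [subsampleSum_eq n, mul_add, sum_add_distrib, mul_sum]
    congr 1
    rw [sum_congr rfl fun i _ => sum_comm, sum_comm]
    refine sum_congr rfl fun i' _ => ?_
    split_ifs with h2
    · rw [recursionRHS, supp_rm h2, mul_sum]
      exact sum_congr rfl fun i _ => by rw [mul_sum]; exact sum_congr rfl fun j _ => by ring
    · simp
  rw [hsplit, urnStep, ← sum_add_distrib]
  refine sum_congr rfl fun i hi => ?_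
  rcases (show n i = 1 ∨ 2 ≤ n i by have := mem_supp.1 hi; omega) with h1 | h2
  · rw [if_neg (by omega), mul_zero, add_zero, if_neg (by omega), h1, Nat.cast_one, mul_sum]
    exact sum_congr rfl fun j _ => by rw [if_pos rfl, ← div_div]; ring
  · rw [if_pos h2, if_pos h2, sum_eq_zero fun j _ => by rw [if_neg (by omega), mul_zero], zero_add]

lemma eq_recursionRHS_of_eq_urnStep (P : Fin K → Fin K → ℚ) {G : (Fin K → ℕ) → ℚ}
    (hG : ∀ n, 2 ≤ (supp n).card → G n = urnStep G (fun i j m => P j i * G m) n)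
    {n : Fin K → ℕ} (hn : 2 ≤ (supp n).card) : G n = recursionRHS P G n := by
  induction hN : ∑ k, n k using Nat.strong_induction_on generalizing n with
  | _ N ih =>
  rw [hG n hn, recursionRHS_eq_urnStep]
  refine urnStep_congr _ fun i hi h2 => ih _ ?_ (supp_rm h2 ▸ hn) rfl
  have := sum_rm (mem_supp.1 hi)
  omega

lemma recursionRHS_congr (P : Fin K → Fin K → ℚ) {G G' : (Fin K → ℕ) → ℚ} {n : Fin K → ℕ}
    (h : ∀ i ∈ supp n, ∀ j ∈ (supp n).erase i, ∀ m, supp m = supp n → m i = 1 →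
      G (mv m i j) = G' (mv m i j)) :
    recursionRHS P G n = recursionRHS P G' n := by
  refine sum_congr rfl fun i hi => sum_congr rfl fun j hj => congrArg _ ?_
  refine sum_congr rfl fun m _ => ?_
  split_ifs with hm
  · dsimp only
    rw [h i hi j hj m hm.1 hm.2]
  · rfl

/-- The recursion only refers to configurations with one color fewer. -/
lemma eq_of_recursion (P : Fin K → Fin K → ℚ) (pI : Fin K → ℚ) {G G' : (Fin K → ℕ) → ℚ}
    (hbase : ∀ n a, supp n = {a} → G n = pI a) (hbase' : ∀ n a, supp n = {a} → G' n = pI a)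
    (hrec : ∀ n, 2 ≤ (supp n).card → G n = recursionRHS P G n)
    (hrec' : ∀ n, 2 ≤ (supp n).card → G' n = recursionRHS P G' n)
    {n : Fin K → ℕ} (hn : (supp n).Nonempty) : G n = G' n := by
  induction hC : (supp n).card using Nat.strong_induction_on generalizing n with
  | _ C ih =>
  rcases Nat.lt_or_ge (supp n).card 2 with h1 | h2
  · obtain ⟨a, ha⟩ := card_eq_one.1 (show (supp n).card = 1 by have := hn.card_pos; omega)
    rw [hbase n a ha, hbase' n a ha]
  rw [hrec n h2, hrec' n h2]
  refine recursionRHS_congr P fun i hi j hj m hsupp hmi => ?_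
  have hsupp' : supp (mv m i j) = (supp n).erase i := by
    rw [supp_mv hmi (hsupp ▸ hj), hsupp]
  refine ih _ ?_ (hsupp' ▸ ⟨j, hj⟩) rfl
  rw [hsupp', card_erase_of_mem hi]
  omega

end Recursion

/-- If `R` satisfies `R(n) = Σ_{i ≠ j ∈ O_n} P_{ji} Σ_{0 ≺ m ⪯ n, m_i = 1}
[Π_k C(n_k, m_k)/C(n,|m|)] · m_j R(m - e_i + e_j) / (|m|(|m|-1))` with boundary
`R(n) = π_a` for single-color configurations, and `Pn` is the distribution over rooted
trees generated by the urn process (characterized by its one-step dynamics `hbase`,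
`hstep`), then `R(n) = E_n[f_P(T)] = Σ_T Pn(T) f_P(T)`. -/
theorem stmt10 (K : ℕ) (P : Fin K → Fin K → ℚ) (pI : Fin K → ℚ)
    (R : (Fin K → ℕ) → ℚ) (Pn : (Fin K → ℕ) → RTree K → ℚ)
    (hRbase : ∀ (a : Fin K) (c : ℕ), 0 < c → R (fun k => if k = a then c else 0) = pI a)
    (hRrec : ∀ n : Fin K → ℕ, 2 ≤ (supp n).card →
      R n = ∑ i ∈ supp n, ∑ j ∈ (supp n).erase i, P j i *
        ∑ g : (∀ k : Fin K, Fin (n k + 1)),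
          if (∀ k, (0 < (g k : ℕ) ↔ 0 < n k)) ∧ ((g i : ℕ) = 1) then
            ((∏ k, (Nat.choose (n k) (g k : ℕ) : ℚ)) /
                (Nat.choose (∑ k, n k) (∑ k, (g k : ℕ)) : ℚ)) *
              ((g j : ℕ) : ℚ) * R (mv (fun k => (g k : ℕ)) i j) /
              (((∑ k, (g k : ℕ) : ℕ) : ℚ) * (((∑ k, (g k : ℕ) : ℕ) : ℚ) - 1))
          else 0)
    (hbase : ∀ (n : Fin K → ℕ) (a : Fin K), supp n = {a} →
      ∀ T : RTree K, Pn n T = if T = (a, fun k => k) then 1 else 0)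
    (hstep : ∀ n : Fin K → ℕ, 2 ≤ (supp n).card → ∀ T : RTree K,
      Pn n T = ∑ i ∈ supp n, ((n i : ℚ) / ((∑ k, n k : ℕ) : ℚ)) *
        (if 2 ≤ n i then Pn (rm n i) T
         else ∑ j ∈ (supp n).erase i, ((n j : ℚ) / (((∑ k, n k : ℕ) : ℚ) - 1)) *
           (if T.2 i = j then Pn (mv n i j) (rmLeaf T i) else 0)))
    (n : Fin K → ℕ) (hn : (supp n).Nonempty) :
    R n = ∑ T : RTree K,
      if IsTreeOn (supp n) T then Pn n T * fP P pI (supp n) T else 0 := by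
  have hR : ∀ m, 2 ≤ (supp m).card → R m = recursionRHS P R m := fun m hm => by
    rw [hRrec m hm]
    refine sum_congr rfl fun i _ => sum_congr rfl fun j _ => congrArg _ ?_
    rw [subsampleSum, ← sum_pi_fin_eq_sum_Iic]
    refine sum_congr rfl fun g _ => ?_
    simp only [supp_eq_supp_iff, hyperWeight, mul_div_assoc, mul_assoc]
  have hE : ∀ m, 2 ≤ (supp m).card → expectedFP P pI Pn m = recursionRHS P (expectedFP P pI Pn) m :=
    fun m => eq_recursionRHS_of_eq_urnStep P fun m hm => expectedFP_eq_urnStep P pI hbase hstep hm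
  refine eq_of_recursion P pI (fun m a ha => ?_)
    (fun m a ha => expectedFP_of_supp_eq_singleton P pI hbase ha) hR hE hn
  rw [eq_ite_of_supp_eq_singleton ha]
  exact hRbase a _ (mem_supp.1 (ha ▸ mem_singleton_self a))
end

section
/- For a sample configuration n with exactly two observed alleles (O_n = {a, b}) and P irreducible on O_n, the leading-order coefficient Q(n) of θ^1 in the Taylor expansion of the sampling probability q(n|θ,P) about θ = 0 equals Λ(n) · [(n_a/n)·π_a P_{ab} + (n_b/n)·π_b P_{ba}], where Λ(n) = (n_a - 1)!(n_b - 1)!/(n-1)!. -/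
/-!
At order `θ⁰` the recursion only coalesces lineages, so the constant term of `q` equals `π_a` on
every monomorphic sample of allele `a` and vanishes on every sample showing two alleles. At order
`θ¹` a two-allele sample `n_a e_a + n_b e_b` therefore only receives mutation input from the
events that make it monomorphic, i.e. when `n_a = 1` or `n_b = 1`. This leaves a linear recursion
in `(n_a, n_b)` whose unique solution is `(n_a - 1)! (n_b - 1)! (n_a π_a P_ab + n_b π_b P_ba) / n!`.
-/

open PowerSeries Finset Nat

/-- The claimed `θ¹` coefficient at `n_a = p + 1`, `n_b = s + 1`, with `A = π_a P_ab` and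
`B = π_b P_ba`. -/
def twoAlleleCoeff (A B : ℚ) (p s : ℕ) : ℚ :=
  p ! * s ! * ((p + 1) * A + (s + 1) * B) / (p + s + 2)!

theorem twoAlleleCoeff_swap (A B : ℚ) (p s : ℕ) :
    twoAlleleCoeff B A s p = twoAlleleCoeff A B p s := by
  rw [twoAlleleCoeff, twoAlleleCoeff, add_comm s p]
  ring

/-- At `p = 0` the coefficient `(p + 1) * p` kills the `g`-term and the mutation input `B`
takes its place, so both cases fit one closed form. -/
theorem coalescence_term_eq {A B : ℚ} {g : ℕ → ℕ → ℚ} {p s : ℕ}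
    (hg : ∀ p', p = p' + 1 → g p (s + 1) = twoAlleleCoeff A B p' s) :
    ((p : ℚ) + 1) * p * g p (s + 1) + (if p = 0 then B else 0) =
      (p + 1) * p ! * s ! * (p * A + (s + 1) * B) / (p + s + 1)! := by
  rcases p with _ | p
  · rw [zero_add, factorial_succ]
    push_cast
    field_simp
    simp
  · rw [hg p rfl, twoAlleleCoeff, if_neg p.succ_ne_zero, factorial_succ p,
      show p + 1 + s + 1 = p + s + 2 by ring]
    push_cast
    ring

theorem eq_twoAlleleCoeff_of_rec {A B : ℚ} {g : ℕ → ℕ → ℚ}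
    (hg : ∀ p s : ℕ, ((p : ℚ) + s + 2) * ((p : ℚ) + s + 1) * g (p + 1) (s + 1) =
      ((p : ℚ) + 1) * p * g p (s + 1) + ((s : ℚ) + 1) * s * g (p + 1) s +
        (if p = 0 then B else 0) + (if s = 0 then A else 0))
    (p s : ℕ) : g (p + 1) (s + 1) = twoAlleleCoeff A B p s := by
  obtain ⟨N, hN⟩ : ∃ N, p + s = N := ⟨_, rfl⟩
  induction N using Nat.strong_induction_on generalizing p s with
  | _ N ih =>
  have hA : ((p : ℚ) + 1) * p * g p (s + 1) + (if p = 0 then B else 0) =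
      (p + 1) * p ! * s ! * (p * A + (s + 1) * B) / (p + s + 1)! :=
    coalescence_term_eq fun p' hp => by subst hp; exact ih (p' + s) (by omega) p' s rfl
  have hB : ((s : ℚ) + 1) * s * g (p + 1) s + (if s = 0 then A else 0) =
      (s + 1) * s ! * p ! * (s * B + (p + 1) * A) / (p + s + 1)! := by
    rw [add_comm p s]
    refine coalescence_term_eq (g := fun s p => g p s) fun s' hs => ?_
    subst hs
    rw [twoAlleleCoeff_swap]
    exact ih (p + s') (by omega) p s' rfl
  have hne : ((p + s + 1 : ℕ) : ℚ) ≠ 0 := by positivity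
  have hrec := hg p s
  rw [add_assoc _ _ (ite _ _ _), add_add_add_comm, hA, hB] at hrec
  rw [twoAlleleCoeff, factorial_succ (p + s + 1), eq_div_iff (by positivity)]
  apply mul_left_cancel₀ hne
  field_simp at hrec
  push_cast at hrec ⊢
  linear_combination hrec

theorem natCast_mul_sub_one_ne_zero {m : ℕ} (hm : 2 ≤ m) : (m : ℚ) * ((m : ℚ) - 1) ≠ 0 := by
  have : (2 : ℚ) ≤ m := by exact_mod_cast hm
  exact mul_ne_zero (by positivity) (by linarith)

section

variable {ι : Type*} [DecidableEq ι]

theorem single_add_single_sub_single (a b : ι) (x y : ℕ) :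
    (Pi.single a (x + 1) + Pi.single b y - Pi.single a 1 : ι → ℕ) =
      Pi.single a x + Pi.single b y := by
  ext k
  simp only [Pi.sub_apply, Pi.add_apply, Pi.single_apply]
  split_ifs <;> omega

theorem single_add_single_sub_single_right (a b : ι) (x y : ℕ) :
    (Pi.single a x + Pi.single b (y + 1) - Pi.single b 1 : ι → ℕ) =
      Pi.single a x + Pi.single b y := by
  rw [add_comm, single_add_single_sub_single, add_comm]

theorem pos_sub_single_one {n : ι → ℕ} {i k : ι} (hi : 0 < n i) (hk : 2 ≤ n k) :
    0 < (n - Pi.single k 1 : ι → ℕ) i := by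
  rcases eq_or_ne i k with rfl | hik
  · simp only [Pi.sub_apply, Pi.single_eq_same]
    omega
  · simpa [Pi.single_eq_of_ne hik] using hi

theorem eq_single_add_single_of_pos_iff {n : ι → ℕ} {a b : ι} (hab : a ≠ b)
    (hpos : ∀ i, 0 < n i ↔ i = a ∨ i = b) : n = Pi.single a (n a) + Pi.single b (n b) := by
  ext k
  by_cases hka : k = a
  · subst hka
    simp [Pi.single_eq_of_ne hab]
  by_cases hkb : k = b
  · subst hkb
    simp [Pi.single_eq_of_ne hab.symm]
  simpa [Pi.single_eq_of_ne hka, Pi.single_eq_of_ne hkb] using (hpos k).not.2 (by tauto)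

variable [Fintype ι]

theorem sum_sub_single_one {n : ι → ℕ} {k : ι} (hk : 0 < n k) :
    ∑ i, (n - Pi.single k 1 : ι → ℕ) i = ∑ i, n i - 1 := by
  have hle : ∀ i ∈ univ, (Pi.single k 1 : ι → ℕ) i ≤ n i := fun i _ => by
    rw [Pi.single_apply]
    split_ifs with h
    · exact h ▸ hk
    · exact Nat.zero_le _
  simp only [Pi.sub_apply, sum_tsub_distrib univ hle, sum_pi_single', if_pos (mem_univ k)]

theorem sum_single_add_single (a b : ι) (x y : ℕ) :
    ∑ i, (Pi.single a x + Pi.single b y : ι → ℕ) i = x + y := by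
  simp [sum_add_distrib]

def CoalescentRecursion (P : ι → ι → ℚ) (q : (ι → ℕ) → ℚ⟦X⟧) : Prop :=
  ∀ n : ι → ℕ, 2 ≤ ∑ i, n i →
    (C (((∑ i, n i : ℕ) : ℚ) * (((∑ i, n i : ℕ) : ℚ) - 1)) + C ((∑ i, n i : ℕ) : ℚ) * X) * q n =
      (∑ i, C ((n i : ℚ) * ((n i : ℚ) - 1)) * q (n - Pi.single i 1)) +
        X * ∑ i, ∑ j, C (P j i * (n i : ℚ)) * q (n - Pi.single i 1 + Pi.single j 1)

namespace CoalescentRecursion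

variable {P : ι → ι → ℚ} {q : (ι → ℕ) → ℚ⟦X⟧}

theorem constantCoeff_eq (h : CoalescentRecursion P q) {n : ι → ℕ} (hn : 2 ≤ ∑ i, n i) :
    ((∑ i, n i : ℕ) : ℚ) * (((∑ i, n i : ℕ) : ℚ) - 1) * constantCoeff (q n) =
      ∑ i, (n i : ℚ) * ((n i : ℚ) - 1) * constantCoeff (q (n - Pi.single i 1)) := by
  simpa only [map_mul, map_add, map_sum, constantCoeff_C, constantCoeff_X, mul_zero, zero_mul,
    add_zero] using congrArg constantCoeff (h n hn)

theorem coeff_one_eq (h : CoalescentRecursion P q) {n : ι → ℕ} (hn : 2 ≤ ∑ i, n i) :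
    ((∑ i, n i : ℕ) : ℚ) * (((∑ i, n i : ℕ) : ℚ) - 1) * coeff 1 (q n) +
        ((∑ i, n i : ℕ) : ℚ) * constantCoeff (q n) =
      (∑ i, (n i : ℚ) * ((n i : ℚ) - 1) * coeff 1 (q (n - Pi.single i 1))) +
        ∑ i, ∑ j, P j i * n i * constantCoeff (q (n - Pi.single i 1 + Pi.single j 1)) := by
  have coeff_one_X_mul (f : ℚ⟦X⟧) : coeff 1 (X * f) = constantCoeff f := by simp
  simpa only [add_mul, mul_assoc, map_add, map_sum, map_mul, coeff_C_mul, coeff_one_X_mul,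
    constantCoeff_C] using congrArg (coeff 1) (h n hn)

theorem constantCoeff_single_succ (h : CoalescentRecursion P q) (a : ι) (x : ℕ) :
    constantCoeff (q (Pi.single a (x + 1))) = constantCoeff (q (Pi.single a 1)) := by
  induction x with
  | zero => rfl
  | succ x ih =>
    have hsum : ∑ i, Pi.single a (x + 2) i = x + 2 := by simp
    have hsub : (Pi.single a (x + 2) - Pi.single a 1 : ι → ℕ) = Pi.single a (x + 1) := by
      simpa using single_add_single_sub_single a a (x + 1) 0
    have hrec := h.constantCoeff_eq (n := Pi.single a (x + 2)) (by omega)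
    rw [hsum, Fintype.sum_eq_single a fun i hi => by simp [Pi.single_eq_of_ne hi], hsub, ih,
      Pi.single_eq_same] at hrec
    exact mul_left_cancel₀ (natCast_mul_sub_one_ne_zero (by omega)) hrec

theorem constantCoeff_eq_zero_of_pos (h : CoalescentRecursion P q) {i j : ι} (hij : i ≠ j)
    {n : ι → ℕ} (hi : 0 < n i) (hj : 0 < n j) : constantCoeff (q n) = 0 := by
  obtain ⟨N, hN⟩ : ∃ N, ∑ k, n k = N := ⟨_, rfl⟩
  induction N using Nat.strong_induction_on generalizing n with
  | _ N ih =>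
  have h2 : 2 ≤ ∑ k, n k := by
    have := sum_le_sum_of_subset (f := n) (subset_univ {i, j})
    rw [sum_pair hij] at this
    omega
  have hterm (k : ι) :
      (n k : ℚ) * ((n k : ℚ) - 1) * constantCoeff (q (n - Pi.single k 1)) = 0 := by
    rcases Nat.lt_or_ge (n k) 2 with hk | hk
    · obtain hk | hk : n k = 0 ∨ n k = 1 := by omega
      all_goals simp [hk]
    · rw [ih _ (by rw [sum_sub_single_one (by omega)]; omega) (pos_sub_single_one hi hk)
        (pos_sub_single_one hj hk) rfl, mul_zero]
  have hrec := h.constantCoeff_eq h2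
  rw [sum_eq_zero fun k _ => hterm k] at hrec
  exact (mul_eq_zero.mp hrec).resolve_left (natCast_mul_sub_one_ne_zero (hN ▸ h2))

theorem mutation_sum_single_add_single (h : CoalescentRecursion P q) {a b : ι} (hab : a ≠ b)
    (p s : ℕ) :
    ∑ j, P j a * ((Pi.single a (p + 1) + Pi.single b (s + 1) : ι → ℕ) a : ℚ) *
        constantCoeff (q (Pi.single a (p + 1) + Pi.single b (s + 1) - Pi.single a 1 +
          Pi.single j 1)) =
      if p = 0 then P b a * constantCoeff (q (Pi.single b 1)) else 0 := by
  rw [single_add_single_sub_single, Fintype.sum_eq_single b]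
  · split_ifs with hp
    · subst hp
      rw [Pi.single_zero, zero_add (Pi.single b _), ← Pi.single_add, h.constantCoeff_single_succ]
      simp [Pi.single_eq_of_ne hab]
    · rw [h.constantCoeff_eq_zero_of_pos hab (by simp [Pi.single_eq_of_ne hab]; omega)
        (by simp), mul_zero]
  · intro j hj
    rw [h.constantCoeff_eq_zero_of_pos hj (by simp) (by simp [Pi.single_eq_of_ne hab.symm]),
      mul_zero]

theorem coeff_one_single_add_single_rec (h : CoalescentRecursion P q) {a b : ι} (hab : a ≠ b)
    (p s : ℕ) :
    ((p : ℚ) + s + 2) * ((p : ℚ) + s + 1) *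
        coeff 1 (q (Pi.single a (p + 1) + Pi.single b (s + 1))) =
      ((p : ℚ) + 1) * p * coeff 1 (q (Pi.single a p + Pi.single b (s + 1))) +
        ((s : ℚ) + 1) * s * coeff 1 (q (Pi.single a (p + 1) + Pi.single b s)) +
        (if p = 0 then P b a * constantCoeff (q (Pi.single b 1)) else 0) +
        (if s = 0 then P a b * constantCoeff (q (Pi.single a 1)) else 0) := by
  have hmut_a := h.mutation_sum_single_add_single hab p s
  have hmut_b := h.mutation_sum_single_add_single hab.symm s p
  rw [add_comm (Pi.single b _)] at hmut_b
  have hvan (i : ι) (hi : i ≠ a ∧ i ≠ b) :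
      (Pi.single a (p + 1) + Pi.single b (s + 1) : ι → ℕ) i = 0 := by
    simp [Pi.single_eq_of_ne hi.1, Pi.single_eq_of_ne hi.2]
  have hrec := h.coeff_one_eq (n := Pi.single a (p + 1) + Pi.single b (s + 1))
    (by rw [sum_single_add_single]; omega)
  rw [sum_single_add_single, h.constantCoeff_eq_zero_of_pos hab (by simp) (by simp),
    Fintype.sum_eq_add a b hab fun i hi => by simp [hvan i hi],
    Fintype.sum_eq_add a b hab fun i hi => by simp [hvan i hi], hmut_a, hmut_b,
    single_add_single_sub_single, single_add_single_sub_single_right] at hrec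
  simp only [Pi.add_apply, Pi.single_eq_same, Pi.single_eq_of_ne hab,
    Pi.single_eq_of_ne hab.symm, add_zero, zero_add, mul_zero] at hrec
  push_cast at hrec
  linear_combination hrec

theorem coeff_one_single_add_single (h : CoalescentRecursion P q) {a b : ι} (hab : a ≠ b)
    (p s : ℕ) :
    coeff 1 (q (Pi.single a (p + 1) + Pi.single b (s + 1))) =
      twoAlleleCoeff (P a b * constantCoeff (q (Pi.single a 1)))
        (P b a * constantCoeff (q (Pi.single b 1))) p s :=
  eq_twoAlleleCoeff_of_rec (g := fun x y => coeff 1 (q (Pi.single a x + Pi.single b y)))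
    (h.coeff_one_single_add_single_rec hab) p s

end CoalescentRecursion

end

theorem stmt14_general (K : ℕ) (P : Fin K → Fin K → ℚ) (pI : Fin K → ℚ)
    (q : (Fin K → ℕ) → PowerSeries ℚ)
    (hbound : ∀ a : Fin K, q (fun k => if k = a then 1 else 0) = PowerSeries.C (pI a))
    (hrec : ∀ n : Fin K → ℕ, 2 ≤ ∑ i, n i →
      (PowerSeries.C (((∑ i, n i : ℕ) : ℚ) * (((∑ i, n i : ℕ) : ℚ) - 1)) +
          PowerSeries.C (((∑ i, n i : ℕ) : ℚ)) * PowerSeries.X) * q n =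
        (∑ i, PowerSeries.C ((n i : ℚ) * ((n i : ℚ) - 1)) *
            q (fun k => n k - if k = i then 1 else 0)) +
          PowerSeries.X * ∑ i, ∑ j, PowerSeries.C (P j i * (n i : ℚ)) *
            q (fun k => n k - (if k = i then 1 else 0) + if k = j then 1 else 0))
    (n : Fin K → ℕ) (a b : Fin K) (hab : a ≠ b)
    (hsupp : Finset.univ.filter (fun i => 0 < n i) = {a, b}) :
    PowerSeries.coeff 1 (q n) =
      ((Nat.factorial (n a - 1) : ℚ) * (Nat.factorial (n b - 1) : ℚ) /
          (Nat.factorial ((∑ i, n i) - 1) : ℚ)) *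
        (((n a : ℚ) / ((∑ i, n i : ℕ) : ℚ)) * pI a * P a b +
          ((n b : ℚ) / ((∑ i, n i : ℕ) : ℚ)) * pI b * P b a) := by
  have hsingle (i : Fin K) : (Pi.single i 1 : Fin K → ℕ) = fun k => if k = i then 1 else 0 :=
    funext (Pi.single_apply i 1)
  have hcoal : CoalescentRecursion P q := fun m hm => by
    simpa only [hsingle, Pi.sub_def, Pi.add_def] using hrec m hm
  have hpos (i : Fin K) : 0 < n i ↔ i = a ∨ i = b := by
    simpa using congrArg (i ∈ ·) hsupp
  obtain ⟨p, hp⟩ : ∃ p, n a = p + 1 := Nat.exists_eq_add_one.2 ((hpos a).2 (.inl rfl))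
  obtain ⟨s, hs⟩ : ∃ s, n b = s + 1 := Nat.exists_eq_add_one.2 ((hpos b).2 (.inr rfl))
  have hn := eq_single_add_single_of_pos_iff hab hpos
  rw [hp, hs] at hn
  subst hn
  rw [hcoal.coeff_one_single_add_single hab, hsingle, hsingle, hbound, hbound,
    sum_single_add_single, twoAlleleCoeff]
  simp only [Pi.add_apply, Pi.single_eq_same, Pi.single_eq_of_ne hab, Pi.single_eq_of_ne hab.symm,
    add_zero, zero_add, constantCoeff_C, Nat.add_sub_cancel,
    show p + 1 + (s + 1) = p + s + 1 + 1 by ring, factorial_succ (p + s + 1)]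
  push_cast
  field_simp

/-- For a sample configuration `n` with exactly two observed alleles `a, b` and mutation
transition matrix `P` irreducible on `{a, b}`, the coefficient of `θ¹` in the Taylor
expansion of the sampling probability `q(n | θ, P)` about `θ = 0` equals
`Λ(n) · [(n_a/n) π_a P_{ab} + (n_b/n) π_b P_{ba}]` with
`Λ(n) = (n_a - 1)! (n_b - 1)! / (n - 1)!`.  The family of sampling probabilities is
represented by its formal Taylor expansion `q : configurations → ℚ[[θ]]` satisfying the
coalescent recursion and the boundary conditions `q(e_i) = π_i`. -/
theorem stmt14 (K : ℕ) (P : Fin K → Fin K → ℚ) (pI : Fin K → ℚ)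
    (q : (Fin K → ℕ) → PowerSeries ℚ)
    (hbound : ∀ a : Fin K, q (fun k => if k = a then 1 else 0) = PowerSeries.C (pI a))
    (hrec : ∀ n : Fin K → ℕ, 2 ≤ ∑ i, n i →
      (PowerSeries.C (((∑ i, n i : ℕ) : ℚ) * (((∑ i, n i : ℕ) : ℚ) - 1)) +
          PowerSeries.C (((∑ i, n i : ℕ) : ℚ)) * PowerSeries.X) * q n =
        (∑ i, PowerSeries.C ((n i : ℚ) * ((n i : ℚ) - 1)) *
            q (fun k => n k - if k = i then 1 else 0)) +
          PowerSeries.X * ∑ i, ∑ j, PowerSeries.C (P j i * (n i : ℚ)) *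
            q (fun k => n k - (if k = i then 1 else 0) + if k = j then 1 else 0))
    (n : Fin K → ℕ) (a b : Fin K) (hab : a ≠ b)
    (hsupp : Finset.univ.filter (fun i => 0 < n i) = {a, b})
    (hirr : P a b ≠ 0 ∧ P b a ≠ 0) :
    PowerSeries.coeff 1 (q n) =
      ((Nat.factorial (n a - 1) : ℚ) * (Nat.factorial (n b - 1) : ℚ) /
          (Nat.factorial ((∑ i, n i) - 1) : ℚ)) *
        (((n a : ℚ) / ((∑ i, n i : ℕ) : ℚ)) * pI a * P a b +
          ((n b : ℚ) / ((∑ i, n i : ℕ) : ℚ)) * pI b * P b a) :=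
  stmt14_general K P pI q hbound hrec n a b hab hsupp
end

section
/- For a sample configuration n = n_a e_a + n_b e_b + n_c e_c with three distinct observed alleles, if P restricted to {a,b,c} is irreducible and reversible (π_i P_{ij} = π_j P_{ji} for i,j ∈ {a,b,c}), then the leading-order coefficient Q(n) equals Λ(n)·[(n_a/n)π_a P_{ab}P_{ac} + (n_b/n)π_b P_{ba}P_{bc} + (n_c/n)π_c P_{ca}P_{cb}], where Λ(n) = (n_a-1)!(n_b-1)!(n_c-1)!/(n-1)! and n = n_a + n_b + n_c. -/
/-!
Write `q_k(n)` for the coefficient of `θ^k` in `q(n)`. Comparing coefficients in the recursion and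
inducting on `k + |n|` shows that `q_k(n) = 0` as soon as `n` has more than `k + 1` distinct
alleles. So at leading order only two kinds of terms survive: coalescences within an allele carried
by at least two lineages, and mutations of a singleton lineage onto another observed allele, which
lead to a sample with one allele fewer. This gives `q_0 = π_v` on monomorphic samples, and then, by
induction on the sample size, closed forms for `q_1` on two-allele and `q_2` on three-allele
samples. In both inductions the mutation term of a singleton equals the closed form of the
coalescence term evaluated at count one; with three alleles this holds only because
`π_v P_vw = π_w P_wv`.
-/

namespace Coalescent

open PowerSeries Finset Nat

variable {K : ℕ}

def dropLineage (n : Fin K → ℕ) (i : Fin K) : Fin K → ℕ :=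
  fun k => n k - if k = i then 1 else 0

def relabelLineage (n : Fin K → ℕ) (i j : Fin K) : Fin K → ℕ :=
  fun k => n k - (if k = i then 1 else 0) + if k = j then 1 else 0

def IsCoalescentRecursion (P : Fin K → Fin K → ℚ) (q : (Fin K → ℕ) → PowerSeries ℚ) : Prop :=
  ∀ n : Fin K → ℕ, 2 ≤ ∑ i, n i →
    (C (((∑ i, n i : ℕ) : ℚ) * (((∑ i, n i : ℕ) : ℚ) - 1)) + C ((∑ i, n i : ℕ) : ℚ) * X) * q n =
      (∑ i, C ((n i : ℚ) * ((n i : ℚ) - 1)) * q (dropLineage n i)) +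
        X * ∑ i, ∑ j, C (P j i * (n i : ℚ)) * q (relabelLineage n i j)

section Samples

variable (n : Fin K → ℕ) (i j : Fin K)

lemma sum_dropLineage_add_one (hi : 0 < n i) : ∑ k, dropLineage n i k + 1 = ∑ k, n k := by
  have h : ∀ k, n k = dropLineage n i k + if k = i then 1 else 0 := by
    intro k; simp only [dropLineage]; split_ifs with hk
    · subst hk; omega
    · omega
  conv_rhs => rw [sum_congr rfl fun k _ => h k, sum_add_distrib]
  simp

lemma sum_relabelLineage (hi : 0 < n i) : ∑ k, relabelLineage n i j k = ∑ k, n k := by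
  rw [← sum_dropLineage_add_one n i hi]
  simp [relabelLineage, dropLineage, sum_add_distrib]

lemma card_support_le_sum : #{k | 0 < n k} ≤ ∑ k, n k :=
  calc #{k | 0 < n k} = ∑ _ ∈ {k | 0 < n k}, 1 := card_eq_sum_ones _
    _ ≤ ∑ k ∈ {k | 0 < n k}, n k := sum_le_sum fun _ hk => (mem_filter.mp hk).2
    _ ≤ ∑ k, n k := sum_le_sum_of_subset (subset_univ _)

lemma card_support_dropLineage (hi : 2 ≤ n i) :
    #{k | 0 < dropLineage n i k} = #{k | 0 < n k} := by
  congr 1; ext k; simp [dropLineage]; grind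

lemma card_support_le_relabelLineage :
    #{k | 0 < n k} ≤ #{k | 0 < relabelLineage n i j k} + 1 :=
  calc #{k | 0 < n k} ≤ #(insert i ({k | 0 < relabelLineage n i j k} : Finset (Fin K))) := by
        apply card_le_card
        intro k
        simp [relabelLineage]
        grind
    _ ≤ _ := card_insert_le _ _

lemma support_subset_relabelLineage (hi : 2 ≤ n i) :
    ({k | 0 < n k} : Finset (Fin K)) ⊆ ({k | 0 < relabelLineage n i j k} : Finset (Fin K)) := by
  intro k; simp only [mem_filter, mem_univ, true_and, relabelLineage]; grind

lemma one_lt_card_support {u v : Fin K} (huv : u ≠ v) (hu : 0 < n u) (hv : 0 < n v) :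
    1 < #{k | 0 < n k} :=
  calc 1 < #{u, v} := by rw [card_pair huv]; norm_num
    _ ≤ _ := card_le_card <| by simp [insert_subset_iff, hu, hv]

lemma two_lt_card_support {u v w : Fin K} (huv : u ≠ v) (huw : u ≠ w) (hvw : v ≠ w)
    (hu : 0 < n u) (hv : 0 < n v) (hw : 0 < n w) : 2 < #{k | 0 < n k} :=
  calc 2 < #{u, v, w} := by
        rw [card_insert_of_notMem (by simp [huv, huw]), card_pair hvw]; norm_num
    _ ≤ _ := card_le_card <| by simp [insert_subset_iff, hu, hv, hw]

lemma dropLineage_single_add (m : Fin K → ℕ) (r : ℕ) :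
    dropLineage (Pi.single i (r + 1) + m) i = Pi.single i r + m := by
  funext k; simp only [dropLineage, Pi.add_apply, Pi.single_apply]; grind

lemma relabelLineage_single_one_add (m : Fin K → ℕ) :
    relabelLineage (Pi.single i 1 + m) i j = m + Pi.single j 1 := by
  funext k; simp only [relabelLineage, Pi.add_apply, Pi.single_apply]; grind

end Samples

noncomputable def alleleTerm (P : Fin K → Fin K → ℚ) (q : (Fin K → ℕ) → PowerSeries ℚ) (k : ℕ)
    (n : Fin K → ℕ) (i : Fin K) : ℚ :=
  n i * (n i - 1) * coeff (k + 1) (q (dropLineage n i)) +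
    ∑ j, P j i * n i * coeff k (q (relabelLineage n i j))

lemma alleleTerm_of_eq_zero {P : Fin K → Fin K → ℚ} {q : (Fin K → ℕ) → PowerSeries ℚ} {k : ℕ}
    {n : Fin K → ℕ} {i : Fin K} (hi : n i = 0) : alleleTerm P q k n i = 0 := by
  simp [alleleTerm, hi]

/-- The sample has `r + 1` lineages of type `u` and `s + 1` of type `v`. -/
def twoAlleleCoeff (P : Fin K → Fin K → ℚ) (pI : Fin K → ℚ) (u v : Fin K) (r s : ℕ) : ℚ :=
  r ! * s ! * ((r + 1) * pI u * P u v + (s + 1) * pI v * P v u) / (r + s + 2)!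

lemma twoAlleleCoeff_comm (P : Fin K → Fin K → ℚ) (pI : Fin K → ℚ) (u v : Fin K) (r s : ℕ) :
    twoAlleleCoeff P pI u v r s = twoAlleleCoeff P pI v u s r := by
  rw [twoAlleleCoeff, twoAlleleCoeff, add_comm r s]; ring

def threeAlleleCoeff (P : Fin K → Fin K → ℚ) (pI : Fin K → ℚ) (u v w : Fin K) (r s t : ℕ) : ℚ :=
  r ! * s ! * t ! * ((r + 1) * pI u * P u v * P u w + (s + 1) * pI v * P v u * P v w +
    (t + 1) * pI w * P w u * P w v) / (r + s + t + 3)!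

lemma threeAlleleCoeff_rotate (P : Fin K → Fin K → ℚ) (pI : Fin K → ℚ) (u v w : Fin K)
    (r s t : ℕ) : threeAlleleCoeff P pI u v w r s t = threeAlleleCoeff P pI v w u s t r := by
  rw [threeAlleleCoeff, threeAlleleCoeff, show r + s + t = s + t + r by ring]; ring

section Recursion

variable {P : Fin K → Fin K → ℚ} {q : (Fin K → ℕ) → PowerSeries ℚ}
  (hrec : IsCoalescentRecursion P q)
include hrec

lemma coeff_zero_recursion (n : Fin K → ℕ) (hn : 2 ≤ ∑ i, n i) :
    ((∑ i, n i : ℕ) : ℚ) * ((∑ i, n i : ℕ) - 1) * coeff 0 (q n) =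
      ∑ i, n i * (n i - 1) * coeff 0 (q (dropLineage n i)) := by
  simpa [add_mul, mul_assoc, map_sum, coeff_C_mul] using congrArg (coeff 0) (hrec n hn)

lemma coeff_succ_recursion (n : Fin K → ℕ) (hn : 2 ≤ ∑ i, n i) (k : ℕ) :
    ((∑ i, n i : ℕ) : ℚ) * ((∑ i, n i : ℕ) - 1) * coeff (k + 1) (q n) +
        (∑ i, n i : ℕ) * coeff k (q n) = ∑ i, alleleTerm P q k n i := by
  have h := congrArg (coeff (k + 1)) (hrec n hn)
  simp only [add_mul, mul_assoc, map_add, map_sum, coeff_C_mul, coeff_succ_X_mul] at h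
  simpa [alleleTerm, mul_assoc, sum_add_distrib] using h

lemma coeff_eq_zero_of_lt_card_support (k : ℕ) (n : Fin K → ℕ)
    (hk : k + 1 < #{i | 0 < n i}) : coeff k (q n) = 0 := by
  induction hN : k + ∑ i, n i using Nat.strong_induction_on generalizing k n with
  | _ N ih =>
  have hn : 2 ≤ ∑ i, n i := by linarith [card_support_le_sum n]
  have hsize : ((∑ i, n i : ℕ) : ℚ) * ((∑ i, n i : ℕ) - 1) ≠ 0 := by
    have : (2 : ℚ) ≤ (∑ i, n i : ℕ) := by exact_mod_cast hn
    nlinarith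
  have hdrop : ∀ k' ≤ k, ∀ i, (n i : ℚ) * (n i - 1) * coeff k' (q (dropLineage n i)) = 0 := by
    intro k' hk' i
    obtain hi | hi | hi : n i = 0 ∨ n i = 1 ∨ 2 ≤ n i := by omega
    · simp [hi]
    · simp [hi]
    · rw [ih (k' + ∑ j, dropLineage n i j) (by linarith [sum_dropLineage_add_one n i (by omega)])
        k' _ (by rw [card_support_dropLineage n i hi]; omega) rfl, mul_zero]
  cases k with
  | zero =>
    have h := coeff_zero_recursion hrec n hn
    rw [sum_eq_zero fun i _ => hdrop 0 le_rfl i] at h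
    exact (mul_eq_zero.mp h).resolve_left hsize
  | succ k =>
    have hterm : ∀ i, alleleTerm P q k n i = 0 := by
      intro i
      rcases Nat.eq_zero_or_pos (n i) with hi | hi
      · exact alleleTerm_of_eq_zero hi
      rw [alleleTerm, hdrop (k + 1) le_rfl i, zero_add]
      refine sum_eq_zero fun j _ => ?_
      rw [ih (k + ∑ l, relabelLineage n i j l) (by rw [sum_relabelLineage n i j hi]; omega) k _
        (by linarith [card_support_le_relabelLineage n i j]) rfl, mul_zero]
    have h := coeff_succ_recursion hrec n hn k
    rw [ih (k + ∑ i, n i) (by omega) k n (by omega) rfl, mul_zero, add_zero,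
      sum_eq_zero fun i _ => hterm i] at h
    exact (mul_eq_zero.mp h).resolve_left hsize

lemma alleleTerm_of_two_le {k : ℕ} {n : Fin K → ℕ} {i : Fin K} (hi : 2 ≤ n i)
    (hk : k + 1 < #{j | 0 < n j}) :
    alleleTerm P q k n i = n i * (n i - 1) * coeff (k + 1) (q (dropLineage n i)) := by
  rw [alleleTerm, add_eq_left]
  refine sum_eq_zero fun j _ => ?_
  rw [coeff_eq_zero_of_lt_card_support hrec k _
    (hk.trans_le (card_le_card (support_subset_relabelLineage n i j hi))), mul_zero]

lemma coeff_zero_eq_zero_of_pos {n : Fin K → ℕ} {u v : Fin K} (huv : u ≠ v) (hu : 0 < n u)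
    (hv : 0 < n v) : coeff 0 (q n) = 0 :=
  coeff_eq_zero_of_lt_card_support hrec 0 n (one_lt_card_support n huv hu hv)

lemma coeff_one_eq_zero_of_pos {n : Fin K → ℕ} {u v w : Fin K} (huv : u ≠ v) (huw : u ≠ w)
    (hvw : v ≠ w) (hu : 0 < n u) (hv : 0 < n v) (hw : 0 < n w) : coeff 1 (q n) = 0 :=
  coeff_eq_zero_of_lt_card_support hrec 1 n (two_lt_card_support n huv huw hvw hu hv hw)

lemma coeff_zero_single {pI : Fin K → ℚ} (hbound : ∀ a, q (Pi.single a 1) = C (pI a))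
    (v : Fin K) (r : ℕ) : coeff 0 (q (Pi.single v (r + 1))) = pI v := by
  induction r with
  | zero => rw [hbound, coeff_zero_C]
  | succ r ih =>
    have hsum : ∑ i, (Pi.single v (r + 2) : Fin K → ℕ) i = r + 2 := by simp
    have h := coeff_zero_recursion hrec (Pi.single v (r + 2)) (by omega)
    have hdrop : dropLineage (Pi.single v (r + 2)) v = Pi.single v (r + 1) := by
      simpa using dropLineage_single_add v (0 : Fin K → ℕ) (r + 1)
    rw [hsum, Fintype.sum_eq_single v fun i hi => by simp [hi], hdrop, ih] at h
    rw [Pi.single_eq_same] at h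
    exact mul_left_cancel₀ (by push_cast; ring_nf; positivity) h

lemma alleleTerm_zero_two_alleles {pI : Fin K → ℚ} (hbound : ∀ a, q (Pi.single a 1) = C (pI a))
    {u v : Fin K} (huv : u ≠ v) (r s : ℕ)
    (ih : ∀ r', r = r' + 1 → coeff 1 (q (Pi.single u (r' + 1) + Pi.single v (s + 1))) =
      twoAlleleCoeff P pI u v r' s) :
    alleleTerm P q 0 (Pi.single u (r + 1) + Pi.single v (s + 1)) u =
      (r + 1)! * s ! * (r * pI u * P u v + (s + 1) * pI v * P v u) / (r + s + 1)! := by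
  cases r with
  | zero =>
    have hmove : ∀ j, coeff 0 (q (relabelLineage (Pi.single u 1 + Pi.single v (s + 1)) u j)) =
        if j = v then pI v else 0 := by
      intro j
      rw [relabelLineage_single_one_add]
      split_ifs with hj
      · rw [hj, ← Pi.single_add, coeff_zero_single hrec hbound]
      · exact coeff_zero_eq_zero_of_pos hrec (Ne.symm hj) (by simp [Ne.symm hj]) (by simp)
    simp [alleleTerm, hmove, factorial_succ, huv]
    field_simp
  | succ r =>
    rw [alleleTerm_of_two_le hrec (by simp [huv])
        (one_lt_card_support _ huv (by simp [huv]) (by simp)), dropLineage_single_add,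
      ih r rfl, twoAlleleCoeff, show r + 1 + s + 1 = r + s + 2 by ring]
    simp [huv]
    push_cast [factorial_succ]
    ring

theorem coeff_one_two_alleles {pI : Fin K → ℚ} (hbound : ∀ a, q (Pi.single a 1) = C (pI a))
    {u v : Fin K} (huv : u ≠ v) (r s : ℕ) :
    coeff 1 (q (Pi.single u (r + 1) + Pi.single v (s + 1))) = twoAlleleCoeff P pI u v r s := by
  induction hN : r + s using Nat.strong_induction_on generalizing r s with
  | _ N ih =>
  set n : Fin K → ℕ := Pi.single u (r + 1) + Pi.single v (s + 1) with hn
  have hsum : ∑ i, n i = r + s + 2 := by simp [n, sum_add_distrib]; ring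
  have hu := alleleTerm_zero_two_alleles hrec hbound huv r s
    fun r' hr => ih (r' + s) (by omega) r' s rfl
  have hv : alleleTerm P q 0 n v = (s + 1)! * r ! * (s * pI v * P v u + (r + 1) * pI u * P u v) /
      (s + r + 1)! := by
    rw [hn, add_comm]
    exact alleleTerm_zero_two_alleles hrec hbound huv.symm s r fun s' hs => by
      rw [add_comm, ih (r + s') (by omega) r s' rfl, twoAlleleCoeff_comm]
  have h := coeff_succ_recursion hrec n (by omega) 0
  rw [coeff_zero_eq_zero_of_pos hrec huv (by simp [n, huv]) (by simp [n]), mul_zero, add_zero,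
    Fintype.sum_eq_add u v huv fun i hi => alleleTerm_of_eq_zero (by simp [n, hi.1, hi.2]),
    hu, hv, hsum] at h
  refine mul_left_cancel₀ (by push_cast; ring_nf; positivity) (h.trans ?_)
  rw [twoAlleleCoeff, add_comm s r, show (r + s + 2)! = (r + s + 2) * (r + s + 1)! from
    factorial_succ _]
  push_cast [factorial_succ]
  field_simp
  ring

lemma alleleTerm_one_three_alleles {pI : Fin K → ℚ}
    (hbound : ∀ a, q (Pi.single a 1) = C (pI a)) {u v w : Fin K} (huv : u ≠ v) (huw : u ≠ w)
    (hvw : v ≠ w) (hrev : pI v * P v w = pI w * P w v) (r s t : ℕ)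
    (ih : ∀ r', r = r' + 1 →
      coeff 2 (q (Pi.single u (r' + 1) + Pi.single v (s + 1) + Pi.single w (t + 1))) =
        threeAlleleCoeff P pI u v w r' s t) :
    alleleTerm P q 1 (Pi.single u (r + 1) + Pi.single v (s + 1) + Pi.single w (t + 1)) u =
      (r + 1)! * s ! * t ! * (r * pI u * P u v * P u w + (s + 1) * pI v * P v u * P v w +
        (t + 1) * pI w * P w u * P w v) / (r + s + t + 2)! := by
  cases r with
  | zero =>
    rw [add_assoc]
    set m : Fin K → ℕ := Pi.single v (s + 1) + Pi.single w (t + 1)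
    have hmove : ∀ j, j ≠ v → j ≠ w → coeff 1 (q (relabelLineage (Pi.single u 1 + m) u j)) = 0 :=
      fun j hjv hjw => coeff_one_eq_zero_of_pos hrec hvw (Ne.symm hjv) (Ne.symm hjw)
        (by simp [m, relabelLineage_single_one_add, hvw, hjv.symm])
        (by simp [m, relabelLineage_single_one_add, hvw.symm, hjw.symm])
        (by simp [relabelLineage_single_one_add])
    have hv : relabelLineage (Pi.single u 1 + m) u v =
        Pi.single v (s + 1 + 1) + Pi.single w (t + 1) := by
      rw [relabelLineage_single_one_add, add_right_comm, ← Pi.single_add]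
    have hw : relabelLineage (Pi.single u 1 + m) u w =
        Pi.single v (s + 1) + Pi.single w (t + 1 + 1) := by
      rw [relabelLineage_single_one_add, add_assoc, ← Pi.single_add]
    simp only [alleleTerm]
    rw [Fintype.sum_eq_add v w hvw fun j hj => by rw [hmove j hj.1 hj.2, mul_zero], hv, hw,
      coeff_one_two_alleles hrec hbound hvw, coeff_one_two_alleles hrec hbound hvw,
      twoAlleleCoeff, twoAlleleCoeff]
    rw [show s + 1 + t + 2 = s + t + 2 + 1 by ring, show s + (t + 1) + 2 = s + t + 2 + 1 by ring]
    simp [m, huv, huw]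
    push_cast [factorial_succ]
    field_simp
    linear_combination ((s + 1 : ℚ) * (t + 1) * (P w u - P v u)) * hrev
  | succ r =>
    rw [alleleTerm_of_two_le hrec (by simp [huv, huw])
        (two_lt_card_support _ huv huw hvw (by simp [huv, huw]) (by simp [hvw]) (by simp)),
      add_assoc (Pi.single u (r + 1 + 1) : Fin K → ℕ), dropLineage_single_add,
      ← add_assoc (Pi.single u (r + 1) : Fin K → ℕ), one_add_one_eq_two, ih r rfl,
      threeAlleleCoeff, show r + 1 + s + t + 2 = r + s + t + 3 by ring]
    simp [huv, huw]
    push_cast [factorial_succ]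
    ring

theorem coeff_two_three_alleles {pI : Fin K → ℚ} (hbound : ∀ a, q (Pi.single a 1) = C (pI a))
    {u v w : Fin K} (huv : u ≠ v) (huw : u ≠ w) (hvw : v ≠ w)
    (hrev_uv : pI u * P u v = pI v * P v u) (hrev_uw : pI u * P u w = pI w * P w u)
    (hrev_vw : pI v * P v w = pI w * P w v) (r s t : ℕ) :
    coeff 2 (q (Pi.single u (r + 1) + Pi.single v (s + 1) + Pi.single w (t + 1))) =
      threeAlleleCoeff P pI u v w r s t := by
  induction hN : r + s + t using Nat.strong_induction_on generalizing r s t with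
  | _ N ih =>
  set n : Fin K → ℕ := Pi.single u (r + 1) + Pi.single v (s + 1) + Pi.single w (t + 1)
  have hsum : ∑ i, n i = r + s + t + 3 := by simp [n, sum_add_distrib]; ring
  have hu := alleleTerm_one_three_alleles hrec hbound huv huw hvw hrev_vw r s t
    fun r' hr => ih (r' + s + t) (by omega) r' s t rfl
  have hv := alleleTerm_one_three_alleles hrec hbound hvw huv.symm huw.symm hrev_uw.symm s t r
    fun s' hs => by
      rw [← add_rotate (Pi.single u (r + 1) : Fin K → ℕ), ih (r + s' + t) (by omega) r s' t rfl,
        threeAlleleCoeff_rotate]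
  have hw := alleleTerm_one_three_alleles hrec hbound huw.symm hvw.symm huv hrev_uv t r s
    fun t' ht => by
      rw [← add_rotate (Pi.single v (s + 1) : Fin K → ℕ),
        ← add_rotate (Pi.single u (r + 1) : Fin K → ℕ), ih (r + s + t') (by omega) r s t' rfl,
        threeAlleleCoeff_rotate, threeAlleleCoeff_rotate]
  rw [← add_rotate (Pi.single u (r + 1) : Fin K → ℕ)] at hv
  rw [← add_rotate (Pi.single v (s + 1) : Fin K → ℕ),
    ← add_rotate (Pi.single u (r + 1) : Fin K → ℕ)] at hw
  have h := coeff_succ_recursion hrec n (by omega) 1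
  rw [coeff_one_eq_zero_of_pos hrec huv huw hvw (by simp [n, huv, huw]) (by simp [n, hvw])
      (by simp [n]), mul_zero, add_zero,
    ← sum_subset (subset_univ {u, v, w}) fun i _ hi => alleleTerm_of_eq_zero (by simp_all [n]),
    sum_insert (by simp [huv, huw]), sum_pair hvw, hu, hv, hw, hsum] at h
  refine mul_left_cancel₀ (by push_cast; ring_nf; positivity) (h.trans ?_)
  rw [threeAlleleCoeff, show s + t + r = r + s + t by ring, show t + r + s = r + s + t by ring,
    show (r + s + t + 3)! = (r + s + t + 3) * (r + s + t + 2)! from factorial_succ _]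
  push_cast [factorial_succ]
  field_simp
  ring

end Recursion

end Coalescent

theorem stmt15_general (K : ℕ) (P : Fin K → Fin K → ℚ) (pI : Fin K → ℚ)
    (q : (Fin K → ℕ) → PowerSeries ℚ)
    (hbound : ∀ a : Fin K, q (fun k => if k = a then 1 else 0) = PowerSeries.C (pI a))
    (hrec : ∀ n : Fin K → ℕ, 2 ≤ ∑ i, n i →
      (PowerSeries.C (((∑ i, n i : ℕ) : ℚ) * (((∑ i, n i : ℕ) : ℚ) - 1)) +
          PowerSeries.C (((∑ i, n i : ℕ) : ℚ)) * PowerSeries.X) * q n =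
        (∑ i, PowerSeries.C ((n i : ℚ) * ((n i : ℚ) - 1)) *
            q (fun k => n k - if k = i then 1 else 0)) +
          PowerSeries.X * ∑ i, ∑ j, PowerSeries.C (P j i * (n i : ℚ)) *
            q (fun k => n k - (if k = i then 1 else 0) + if k = j then 1 else 0))
    (n : Fin K → ℕ) (a b c : Fin K) (hab : a ≠ b) (hac : a ≠ c) (hbc : b ≠ c)
    (hsupp : Finset.univ.filter (fun i => 0 < n i) = {a, b, c})
    (hrev : ∀ i ∈ ({a, b, c} : Finset (Fin K)), ∀ j ∈ ({a, b, c} : Finset (Fin K)),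
      pI i * P i j = pI j * P j i) :
    PowerSeries.coeff 2 (q n) =
      ((Nat.factorial (n a - 1) : ℚ) * (Nat.factorial (n b - 1) : ℚ) *
          (Nat.factorial (n c - 1) : ℚ) / (Nat.factorial ((∑ i, n i) - 1) : ℚ)) *
        (((n a : ℚ) / ((∑ i, n i : ℕ) : ℚ)) * pI a * P a b * P a c +
          ((n b : ℚ) / ((∑ i, n i : ℕ) : ℚ)) * pI b * P b a * P b c +
          ((n c : ℚ) / ((∑ i, n i : ℕ) : ℚ)) * pI c * P c a * P c b) := by
  have hsingle : ∀ a, q (Pi.single a 1) = PowerSeries.C (pI a) := fun a => by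
    rw [← hbound a]; congr 1; funext k; exact Pi.single_apply a 1 k
  have hpos : ∀ x, 0 < n x ↔ x = a ∨ x = b ∨ x = c := by simpa [Finset.ext_iff] using hsupp
  obtain ⟨r, hr⟩ := Nat.exists_eq_add_one.mpr ((hpos a).2 (by simp))
  obtain ⟨s, hs⟩ := Nat.exists_eq_add_one.mpr ((hpos b).2 (by simp))
  obtain ⟨t, ht⟩ := Nat.exists_eq_add_one.mpr ((hpos c).2 (by simp))
  have hn : n = Pi.single a (r + 1) + Pi.single b (s + 1) + Pi.single c (t + 1) := by
    funext x; simp only [Pi.add_apply, Pi.single_apply]; have := hpos x; grind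
  subst hn
  rw [Coalescent.coeff_two_three_alleles hrec hsingle hab hac hbc (hrev a (by simp) b (by simp))
    (hrev a (by simp) c (by simp)) (hrev b (by simp) c (by simp)), Coalescent.threeAlleleCoeff]
  simp [hab, hac, hbc, hab.symm, hac.symm, hbc.symm, Finset.sum_add_distrib]
  rw [show r + 1 + (s + 1) + t = r + s + t + 2 by ring,
    show (r + s + t + 3).factorial = (r + s + t + 3) * (r + s + t + 2).factorial from
      Nat.factorial_succ _]
  push_cast
  field_simp
  ring

/-- For a sample configuration `n = n_a e_a + n_b e_b + n_c e_c` with three distinct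
observed alleles, if `P` restricted to `{a, b, c}` is irreducible and reversible, then
the coefficient of `θ²` in the Taylor expansion of the sampling probability about `θ = 0`
equals `Λ(n) · [(n_a/n) π_a P_{ab} P_{ac} + (n_b/n) π_b P_{ba} P_{bc}
+ (n_c/n) π_c P_{ca} P_{cb}]` with `Λ(n) = (n_a-1)!(n_b-1)!(n_c-1)!/(n-1)!`. -/
theorem stmt15 (K : ℕ) (P : Fin K → Fin K → ℚ) (pI : Fin K → ℚ)
    (q : (Fin K → ℕ) → PowerSeries ℚ)
    (hbound : ∀ a : Fin K, q (fun k => if k = a then 1 else 0) = PowerSeries.C (pI a))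
    (hrec : ∀ n : Fin K → ℕ, 2 ≤ ∑ i, n i →
      (PowerSeries.C (((∑ i, n i : ℕ) : ℚ) * (((∑ i, n i : ℕ) : ℚ) - 1)) +
          PowerSeries.C (((∑ i, n i : ℕ) : ℚ)) * PowerSeries.X) * q n =
        (∑ i, PowerSeries.C ((n i : ℚ) * ((n i : ℚ) - 1)) *
            q (fun k => n k - if k = i then 1 else 0)) +
          PowerSeries.X * ∑ i, ∑ j, PowerSeries.C (P j i * (n i : ℚ)) *
            q (fun k => n k - (if k = i then 1 else 0) + if k = j then 1 else 0))
    (n : Fin K → ℕ) (a b c : Fin K) (hab : a ≠ b) (hac : a ≠ c) (hbc : b ≠ c)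
    (hsupp : Finset.univ.filter (fun i => 0 < n i) = {a, b, c})
    (hrev : ∀ i ∈ ({a, b, c} : Finset (Fin K)), ∀ j ∈ ({a, b, c} : Finset (Fin K)),
      pI i * P i j = pI j * P j i)
    (hirr : ∀ i ∈ ({a, b, c} : Finset (Fin K)), ∀ j ∈ ({a, b, c} : Finset (Fin K)),
      i ≠ j → ∃ l : List (Fin K), (∀ x ∈ l, x ∈ ({a, b, c} : Finset (Fin K))) ∧
        List.Chain (fun u v => P u v ≠ 0) i (l ++ [j])) :
    PowerSeries.coeff 2 (q n) =
      ((Nat.factorial (n a - 1) : ℚ) * (Nat.factorial (n b - 1) : ℚ) *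
          (Nat.factorial (n c - 1) : ℚ) / (Nat.factorial ((∑ i, n i) - 1) : ℚ)) *
        (((n a : ℚ) / ((∑ i, n i : ℕ) : ℚ)) * pI a * P a b * P a c +
          ((n b : ℚ) / ((∑ i, n i : ℕ) : ℚ)) * pI b * P b a * P b c +
          ((n c : ℚ) / ((∑ i, n i : ℕ) : ℚ)) * pI c * P c a * P c b) :=
  stmt15_general K P pI q hbound hrec n a b c hab hac hbc hsupp hrev
end
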